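/- arXiv:2412.03258 — 10 statements merged into one kernel-verified Lean document; each statement's English description precedes it below -/
import Mathlib

section
/- For every hyper-policy ζ, the hyper Q-function equals the expectation of the composite policy's action-value function over the selected mode: for all states s and all modes u ∈ Fin M, Q_H^ζ s u = ∑_{a∈A} φ u s a · Q^{π_ζ} s a. -/
open Finset

/-- `π` is a (stochastic) policy over a finite action set. -/
def IsPolicy {S A : Type*} [Fintype A] (π : S → A → ℝ) : Prop :=
  (∀ s a, 0 ≤ π s a) ∧ ∀ s, ∑ a, π s a = 1

/-- `P` is a transition kernel over a finite state set. -/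
def IsKernel {S A : Type*} [Fintype S] (P : S → A → S → ℝ) : Prop :=
  (∀ s a s', 0 ≤ P s a s') ∧ ∀ s a, ∑ s', P s a s' = 1

/-- `Q` satisfies the Bellman equation for policy `π` in the MDP `(P, r, γ)`. -/
def IsBellmanQ {S A : Type*} [Fintype S] [Fintype A]
    (P : S → A → S → ℝ) (r : S → A → ℝ) (γ : ℝ) (π : S → A → ℝ)
    (Q : S → A → ℝ) : Prop :=
  ∀ s a, Q s a = r s a + γ * ∑ s', P s a s' * ∑ a', π s' a' * Q s' a'

/-- `QH` satisfies the hyper Bellman equation for hyper-policy `ζ`,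
with hyper reward `r_H s u = ∑ a, φ u s a * r s a` and hyper transition
`P_H s u s' = ∑ a, φ u s a * P s a s'`. -/
def IsHyperBellmanQ {S A : Type*} [Fintype S] [Fintype A] {M : ℕ}
    (P : S → A → S → ℝ) (r : S → A → ℝ) (γ : ℝ)
    (φ : Fin M → S → A → ℝ) (ζ : S → Fin M → ℝ)
    (QH : S → Fin M → ℝ) : Prop :=
  ∀ s u, QH s u = (∑ a, φ u s a * r s a) +
    γ * ∑ s', (∑ a, φ u s a * P s a s') * (∑ u', ζ s' u' * QH s' u')

/- `d` is the normalized discounted state-visitation distribution of policy `π`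
started from `s₀`. -/
open Classical in
def IsVisitation {S A : Type*} [Fintype S] [Fintype A]
    (P : S → A → S → ℝ) (γ : ℝ) (π : S → A → ℝ) (s₀ : S)
    (d : S → ℝ) : Prop :=
  ∀ s', d s' = (1 - γ) * (if s' = s₀ then 1 else 0) +
    γ * ∑ s, d s * ∑ a, π s a * P s a s'

/-- For every hyper-policy ζ, the hyper Q-function equals the expectation of the
composite policy's action-value function over the selected mode. -/
theorem hyperQ_eq_expected_Q
    {S A : Type*} [Fintype S] [Fintype A] [Nonempty S] [Nonempty A]
    (P : S → A → S → ℝ) (r : S → A → ℝ) (γ : ℝ)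
    (hP : IsKernel P) (hγ0 : 0 ≤ γ) (hγ1 : γ < 1)
    {M : ℕ} (hM : 1 ≤ M)
    (φ : Fin M → S → A → ℝ) (hφ : ∀ u, IsPolicy (φ u))
    (ζ : S → Fin M → ℝ) (hζ : IsPolicy ζ)
    (Qπ : S → A → ℝ)
    (hQπ : IsBellmanQ P r γ (fun s a => ∑ u, ζ s u * φ u s a) Qπ)
    (QH : S → Fin M → ℝ) (hQH : IsHyperBellmanQ P r γ φ ζ QH) :
    ∀ s u, QH s u = ∑ a, φ u s a * Qπ s a := by
  
  classical
  haveI : NeZero M := ⟨by omega⟩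
  set R : S → Fin M → ℝ := fun s u => ∑ a, φ u s a * Qπ s a with hRdef
  set D : S → Fin M → ℝ := fun s u => QH s u - R s u with hDdef
  -- value identity
  have hV : ∀ s', (∑ a', (∑ u', ζ s' u' * φ u' s' a') * Qπ s' a')
      = ∑ u', ζ s' u' * R s' u' := by
    intro s'
    simp only [hRdef, Finset.sum_mul, Finset.mul_sum, mul_assoc]
    exact Finset.sum_comm
  -- R satisfies the hyper Bellman equation
  have hRbell : ∀ s u, R s u = (∑ a, φ u s a * r s a) +
      γ * ∑ s', (∑ a, φ u s a * P s a s') * (∑ u', ζ s' u' * R s' u') := by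
    intro s u
    have : R s u = ∑ a, φ u s a *
        (r s a + γ * ∑ s', P s a s' * ∑ a', (∑ u'', ζ s' u'' * φ u'' s' a') * Qπ s' a') := by
      simp only [hRdef]
      exact Finset.sum_congr rfl fun a _ => by rw [hQπ s a]
    rw [this]
    have swap : ∀ (W : S → ℝ), ∑ a, φ u s a * (γ * ∑ s', P s a s' * W s')
        = γ * ∑ s', (∑ a, φ u s a * P s a s') * W s' := by
      intro W
      simp only [Finset.mul_sum, Finset.sum_mul]
      rw [Finset.sum_comm]
      exact Finset.sum_congr rfl fun s' _ => Finset.sum_congr rfl fun a _ => by ring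
    calc ∑ a, φ u s a * (r s a + γ * ∑ s', P s a s' * ∑ a', (∑ u'', ζ s' u'' * φ u'' s' a') * Qπ s' a')
        = ∑ a, φ u s a * (r s a + γ * ∑ s', P s a s' * ∑ u', ζ s' u' * R s' u') := by
          apply Finset.sum_congr rfl; intro a _
          have : ∑ s', P s a s' * ∑ a', (∑ u'', ζ s' u'' * φ u'' s' a') * Qπ s' a'
              = ∑ s', P s a s' * ∑ u', ζ s' u' * R s' u' :=
            Finset.sum_congr rfl fun s' _ => by rw [hV s']
          rw [this]
      _ = (∑ a, φ u s a * r s a) + ∑ a, φ u s a * (γ * ∑ s', P s a s' * ∑ u', ζ s' u' * R s' u') := by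
          rw [← Finset.sum_add_distrib]
          apply Finset.sum_congr rfl; intro a _; ring
      _ = _ := by rw [swap]
  -- difference equation
  have key : ∀ s u, D s u =
      γ * ∑ s', (∑ a, φ u s a * P s a s') * ∑ u', ζ s' u' * D s' u' := by
    intro s u
    have : ∑ s', (∑ a, φ u s a * P s a s') * ∑ u', ζ s' u' * D s' u'
        = (∑ s', (∑ a, φ u s a * P s a s') * ∑ u', ζ s' u' * QH s' u')
          - ∑ s', (∑ a, φ u s a * P s a s') * ∑ u', ζ s' u' * R s' u' := by
      rw [← Finset.sum_sub_distrib]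
      apply Finset.sum_congr rfl; intro s' _
      rw [← mul_sub, ← Finset.sum_sub_distrib]
      congr 1
      apply Finset.sum_congr rfl; intro u' _
      simp only [hDdef]; ring
    rw [this]
    have h1 := hQH s u
    have h2 := hRbell s u
    simp only [hDdef]
    rw [h1, h2]; ring
  -- contraction argument
  obtain ⟨p, -, hp⟩ := Finset.exists_max_image (Finset.univ : Finset (S × Fin M))
    (fun p => |D p.1 p.2|) Finset.univ_nonempty
  set E := |D p.1 p.2| with hE
  have hE0 : 0 ≤ E := abs_nonneg _
  have hbound : ∀ s u, |D s u| ≤ γ * E := by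
    intro s u
    rw [key s u, abs_mul, abs_of_nonneg hγ0]
    apply mul_le_mul_of_nonneg_left _ hγ0
    calc |∑ s', (∑ a, φ u s a * P s a s') * ∑ u', ζ s' u' * D s' u'|
        ≤ ∑ s', |(∑ a, φ u s a * P s a s') * ∑ u', ζ s' u' * D s' u'| :=
          Finset.abs_sum_le_sum_abs _ _
      _ ≤ ∑ s', (∑ a, φ u s a * P s a s') * E := by
          apply Finset.sum_le_sum; intro s' _
          rw [abs_mul]
          have hPH0 : 0 ≤ ∑ a, φ u s a * P s a s' :=
            Finset.sum_nonneg fun a _ => mul_nonneg ((hφ u).1 s a) (hP.1 s a s')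
          rw [abs_of_nonneg hPH0]
          apply mul_le_mul_of_nonneg_left _ hPH0
          calc |∑ u', ζ s' u' * D s' u'| ≤ ∑ u', |ζ s' u' * D s' u'| :=
                Finset.abs_sum_le_sum_abs _ _
            _ ≤ ∑ u', ζ s' u' * E := by
                apply Finset.sum_le_sum; intro u' _
                rw [abs_mul, abs_of_nonneg (hζ.1 s' u')]
                exact mul_le_mul_of_nonneg_left (hp (s', u') (Finset.mem_univ _)) (hζ.1 s' u')
            _ = E := by rw [← Finset.sum_mul, hζ.2 s', one_mul]
      _ = E := by
          rw [← Finset.sum_mul]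
          have : ∑ s', ∑ a, φ u s a * P s a s' = 1 := by
            rw [Finset.sum_comm]
            calc ∑ a, ∑ s', φ u s a * P s a s'
                = ∑ a, φ u s a * ∑ s', P s a s' := by
                  simp [Finset.mul_sum]
              _ = 1 := by simp only [hP.2]; simpa using (hφ u).2 s
          rw [this, one_mul]
  have hEz : E = 0 := by
    have := hbound p.1 p.2
    nlinarith
  intro s u
  have := hbound s u
  rw [hEz, mul_zero] at this
  have : D s u = 0 := abs_nonpos_iff.mp this
  simpa [hDdef, sub_eq_zero] using this
end

section
/- For every hyper-policy ζ, the hyper state-value equals the state-value of the composite policy: for every state s, ∑_{u∈Fin M} ζ s u · Q_H^ζ s u = V^{π_ζ} s. -/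
open Finset

/-- the hyper state-value equals the state-value of the composite policy. -/
theorem hyperV_eq_compositeV
    {S A : Type*} [Fintype S] [Fintype A] [Nonempty S] [Nonempty A]
    (P : S → A → S → ℝ) (r : S → A → ℝ) (γ : ℝ)
    (hP : IsKernel P) (hγ0 : 0 ≤ γ) (hγ1 : γ < 1)
    {M : ℕ} (hM : 1 ≤ M)
    (φ : Fin M → S → A → ℝ) (hφ : ∀ u, IsPolicy (φ u))
    (ζ : S → Fin M → ℝ) (hζ : IsPolicy ζ)
    (Qπ : S → A → ℝ)
    (hQπ : IsBellmanQ P r γ (fun s a => ∑ u, ζ s u * φ u s a) Qπ)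
    (QH : S → Fin M → ℝ) (hQH : IsHyperBellmanQ P r γ φ ζ QH) :
    ∀ s, ∑ u, ζ s u * QH s u = ∑ a, (∑ u, ζ s u * φ u s a) * Qπ s a := by

  classical
  set π : S → A → ℝ := fun s a => ∑ u, ζ s u * φ u s a with hπ
  set W : S → ℝ := fun s => ∑ u, ζ s u * QH s u with hWdef
  set V : S → ℝ := fun s => ∑ a, π s a * Qπ s a with hVdef
  set K : S → S → ℝ := fun s s' => ∑ a, π s a * P s a s' with hKdef
  have hswap : ∀ (s : S) (g : A → ℝ),
      ∑ u, ζ s u * ∑ a, φ u s a * g a = ∑ a, π s a * g a := by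
    intro s g
    simp only [hπ, Finset.mul_sum, Finset.sum_mul]
    rw [Finset.sum_comm]
    exact Finset.sum_congr rfl fun a _ => Finset.sum_congr rfl fun u _ => by ring
  have hπpol : IsPolicy π := by
    constructor
    · intro s a
      exact Finset.sum_nonneg fun u _ => mul_nonneg (hζ.1 s u) ((hφ u).1 s a)
    · intro s
      have := hswap s (fun _ => 1)
      simpa [ (hφ _).2 s, hζ.2 s] using this.symm
  have hKnn : ∀ s s', 0 ≤ K s s' := fun s s' =>
    Finset.sum_nonneg fun a _ => mul_nonneg (hπpol.1 s a) (hP.1 s a s')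
  have hKsum : ∀ s, ∑ s', K s s' = 1 := by
    intro s
    simp only [hKdef]
    rw [Finset.sum_comm]
    simp only [← Finset.mul_sum, hP.2, mul_one]
    exact hπpol.2 s
  have hsw2 : ∀ (s : S) (p : A → ℝ) (g : S → ℝ),
      ∑ s', (∑ a, p a * P s a s') * g s' = ∑ a, p a * ∑ s', P s a s' * g s' := by
    intro s p g
    simp only [Finset.sum_mul, Finset.mul_sum]
    rw [Finset.sum_comm]
    exact Finset.sum_congr rfl fun a _ => Finset.sum_congr rfl fun s' _ => by ring
  have hWrec : ∀ s, W s = (∑ a, π s a * r s a) + γ * ∑ s', K s s' * W s' := by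
    intro s
    have h1 : W s = ∑ u, ζ s u * ∑ a, φ u s a * (r s a + γ * ∑ s', P s a s' * W s') := by
      refine Finset.sum_congr rfl fun u _ => ?_
      congr 1
      rw [hQH s u]
      simp only [mul_add, Finset.sum_add_distrib]
      congr 1
      rw [hsw2 s (fun a => φ u s a) (fun s' => ∑ u', ζ s' u' * QH s' u')]
      rw [Finset.mul_sum]
      refine Finset.sum_congr rfl fun a _ => ?_
      simp only [hWdef]
      ring
    rw [h1, hswap]
    simp only [mul_add, Finset.sum_add_distrib]
    congr 1
    rw [show (γ * ∑ s', K s s' * W s') = γ * ∑ a, π s a * ∑ s', P s a s' * W s' by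
      rw [← hsw2 s (fun a => π s a) W]]
    rw [Finset.mul_sum]
    exact Finset.sum_congr rfl fun a _ => by ring
  have hVrec : ∀ s, V s = (∑ a, π s a * r s a) + γ * ∑ s', K s s' * V s' := by
    intro s
    have h1 : V s = ∑ a, π s a * (r s a + γ * ∑ s', P s a s' * V s') := by
      refine Finset.sum_congr rfl fun a _ => ?_
      rw [hQπ s a]
    rw [h1]
    simp only [mul_add, Finset.sum_add_distrib]
    congr 1
    rw [show (γ * ∑ s', K s s' * V s') = γ * ∑ a, π s a * ∑ s', P s a s' * V s' by
      rw [← hsw2 s (fun a => π s a) V]]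
    rw [Finset.mul_sum]
    exact Finset.sum_congr rfl fun a _ => by ring
  have hfrec : ∀ s, W s - V s = γ * ∑ s', K s s' * (W s' - V s') := by
    intro s
    rw [hWrec s, hVrec s]
    simp only [mul_sub, Finset.sum_sub_distrib]
    ring
  obtain ⟨s₀, _, hs₀⟩ := Finset.exists_max_image Finset.univ
    (fun s => |W s - V s|) ⟨Classical.arbitrary S, Finset.mem_univ _⟩
  have hbound : |W s₀ - V s₀| ≤ γ * |W s₀ - V s₀| := by
    calc |W s₀ - V s₀| = γ * |∑ s', K s₀ s' * (W s' - V s')| := by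
          rw [hfrec s₀, abs_mul, abs_of_nonneg hγ0]
      _ ≤ γ * ∑ s', K s₀ s' * |W s' - V s'| := by
          refine mul_le_mul_of_nonneg_left ?_ hγ0
          refine (Finset.abs_sum_le_sum_abs _ _).trans ?_
          refine Finset.sum_le_sum fun s' _ => ?_
          rw [abs_mul, abs_of_nonneg (hKnn s₀ s')]
      _ ≤ γ * ∑ s', K s₀ s' * |W s₀ - V s₀| := by
          refine mul_le_mul_of_nonneg_left ?_ hγ0
          exact Finset.sum_le_sum fun s' _ =>
            mul_le_mul_of_nonneg_left (hs₀ s' (Finset.mem_univ _)) (hKnn s₀ s')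
      _ = γ * |W s₀ - V s₀| := by
          rw [← Finset.sum_mul, hKsum, one_mul]
  have hzero : |W s₀ - V s₀| ≤ 0 := by nlinarith [abs_nonneg (W s₀ - V s₀)]
  intro s
  have : |W s - V s| ≤ 0 := le_trans (hs₀ s (Finset.mem_univ _)) hzero
  have := abs_nonpos_iff.mp this
  have : W s = V s := by linarith
  simpa [hWdef, hVdef, hπ] using this
end

section
/- The composite policy induced by any greedy hyper-policy improves upon the behaviour policy: for every state s ∈ S, V^{π_g} s ≥ V^{π_b} s. -/
open Finset

/-- If `D ≤ γ · (stochastic average of D)` pointwise with `0 ≤ γ < 1`, then `D ≤ 0`. -/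
lemma contraction_nonpos {T : Type*} [Fintype T] [Nonempty T] {γ : ℝ}
    (hγ0 : 0 ≤ γ) (hγ1 : γ < 1) (D : T → ℝ) (w : T → T → ℝ)
    (hw0 : ∀ t t', 0 ≤ w t t') (hw1 : ∀ t, ∑ t', w t t' = 1)
    (h : ∀ t, D t ≤ γ * ∑ t', w t t' * D t') : ∀ t, D t ≤ 0 := by
  obtain ⟨t0, -, ht0⟩ := Finset.exists_max_image Finset.univ D
    ⟨Classical.arbitrary T, Finset.mem_univ _⟩
  have hb : ∀ t, D t ≤ D t0 := fun t => ht0 t (Finset.mem_univ t)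
  have h1 : ∑ t', w t0 t' * D t' ≤ D t0 := by
    calc ∑ t', w t0 t' * D t' ≤ ∑ t', w t0 t' * D t0 :=
          Finset.sum_le_sum fun i _ => mul_le_mul_of_nonneg_left (hb i) (hw0 t0 i)
      _ = D t0 := by rw [← Finset.sum_mul, hw1, one_mul]
  have h2 : D t0 ≤ γ * D t0 :=
    le_trans (h t0) (mul_le_mul_of_nonneg_left h1 hγ0)
  have h3 : D t0 ≤ 0 := by nlinarith
  intro t; exact le_trans (hb t) h3

/-- Expanding a Bellman-type one-step backup under an averaging over actions. -/
lemma backup_expand {S A : Type*} [Fintype S] [Fintype A]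
    (P : S → A → S → ℝ) (r : S → A → ℝ) (γ : ℝ) (p : A → ℝ) (s : S) (X : S → ℝ) :
    ∑ a, p a * (r s a + γ * ∑ s', P s a s' * X s') =
      (∑ a, p a * r s a) + γ * ∑ s', (∑ a, p a * P s a s') * X s' := by
  have h1 : ∀ a, p a * (r s a + γ * ∑ s', P s a s' * X s') =
      p a * r s a + ∑ s', γ * (p a * P s a s' * X s') := by
    intro a
    rw [mul_add]
    congr 1
    rw [Finset.mul_sum, Finset.mul_sum]
    exact Finset.sum_congr rfl fun s' _ => by ring
  simp only [h1]
  rw [Finset.sum_add_distrib, Finset.sum_comm]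
  congr 1
  rw [Finset.mul_sum]
  exact Finset.sum_congr rfl fun s' _ => by
    rw [Finset.sum_mul, Finset.mul_sum]

/-- the composite policy induced by any greedy hyper-policy improves upon
the behaviour policy: `V^{π_g} s ≥ V^{π_b} s` for every state `s`. -/
theorem greedy_composite_improves_behaviour
    {S A : Type*} [Fintype S] [Fintype A] [Nonempty S] [Nonempty A]
    (P : S → A → S → ℝ) (r : S → A → ℝ) (γ : ℝ)
    (hP : IsKernel P) (hγ0 : 0 ≤ γ) (hγ1 : γ < 1)
    {M : ℕ} (hM : 1 ≤ M)
    (φ : Fin M → S → A → ℝ) (hφ : ∀ u, IsPolicy (φ u))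
    (α : S → Fin M → ℝ) (hα : IsPolicy α)
    (QHb : S → Fin M → ℝ) (hQHb : IsHyperBellmanQ P r γ φ α QHb)
    (ζg : S → Fin M) (hg : ∀ s u, QHb s u ≤ QHb s (ζg s))
    (Qg : S → A → ℝ) (hQg : IsBellmanQ P r γ (fun s a => φ (ζg s) s a) Qg)
    (Qb : S → A → ℝ)
    (hQb : IsBellmanQ P r γ (fun s a => ∑ u, α s u * φ u s a) Qb) :
    ∀ s, ∑ a, (∑ u, α s u * φ u s a) * Qb s a ≤ ∑ a, φ (ζg s) s a * Qg s a := by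
  haveI : Nonempty (Fin M) := ⟨⟨0, by omega⟩⟩
  -- abbreviations
  set Vb : S → ℝ := fun s => ∑ a, (∑ u, α s u * φ u s a) * Qb s a with hVbdef
  set Vg : S → ℝ := fun s => ∑ a, φ (ζg s) s a * Qg s a with hVgdef
  set F : S → Fin M → ℝ := fun s u => ∑ a, φ u s a * Qb s a with hFdef
  -- averaging F over α gives Vb
  have hVbF : ∀ t : S, (∑ u', α t u' * F t u') = Vb t := by
    intro t
    simp only [hFdef, hVbdef, Finset.mul_sum, Finset.sum_mul]
    rw [Finset.sum_comm]
    refine Finset.sum_congr rfl fun a _ => ?_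
    exact Finset.sum_congr rfl fun u' _ => by ring
  -- F satisfies the same hyper Bellman equation as QHb
  have hF : ∀ s u, F s u = (∑ a, φ u s a * r s a) +
      γ * ∑ s', (∑ a, φ u s a * P s a s') * (∑ u', α s' u' * F s' u') := by
    intro s u
    have : F s u = ∑ a, φ u s a *
        (r s a + γ * ∑ s', P s a s' * ∑ a', (∑ u, α s' u * φ u s' a') * Qb s' a') := by
      simp only [hFdef]; exact Finset.sum_congr rfl fun a _ => by rw [← hQb s a]
    rw [this, backup_expand]
    congr 2
    refine Finset.sum_congr rfl fun s' _ => ?_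
    rw [hVbF s']
  -- Uniqueness: QHb = F
  have hEq : ∀ s u, QHb s u = F s u := by
    have key : ∀ (G : S → Fin M → ℝ),
        (∀ s u, G s u = γ * ∑ s', (∑ a, φ u s a * P s a s') * (∑ u', α s' u' * G s' u')) →
        ∀ s u, G s u ≤ 0 := by
      intro G hG
      have := contraction_nonpos (T := S × Fin M) hγ0 hγ1 (fun p => G p.1 p.2)
        (fun p q => (∑ a, φ p.2 p.1 a * P p.1 a q.1) * α q.1 q.2)
        (fun p q => mul_nonneg
          (Finset.sum_nonneg fun a _ => mul_nonneg ((hφ p.2).1 p.1 a) (hP.1 p.1 a q.1))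
          (hα.1 q.1 q.2))
        (fun p => by
          rw [Fintype.sum_prod_type]
          have : ∀ s' : S, ∑ u' : Fin M,
              (∑ a, φ p.2 p.1 a * P p.1 a s') * α s' u' = ∑ a, φ p.2 p.1 a * P p.1 a s' := by
            intro s'; rw [← Finset.mul_sum, hα.2 s', mul_one]
          simp only [this]
          rw [Finset.sum_comm]
          have : ∀ a, ∑ s', φ p.2 p.1 a * P p.1 a s' = φ p.2 p.1 a := by
            intro a; rw [← Finset.mul_sum, hP.2 p.1 a, mul_one]
          simp only [this, (hφ p.2).2 p.1])
        (fun p => by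
          rw [Fintype.sum_prod_type]
          have : ∀ s' : S, ∑ u' : Fin M,
              (∑ a, φ p.2 p.1 a * P p.1 a s') * α s' u' * G s' u' =
              (∑ a, φ p.2 p.1 a * P p.1 a s') * ∑ u', α s' u' * G s' u' := by
            intro s'; rw [Finset.mul_sum]; exact Finset.sum_congr rfl fun u' _ => by ring
          simp only [this]
          exact le_of_eq (hG p.1 p.2))
      intro s u; exact this (s, u)
    have hrec : ∀ s u, (QHb s u - F s u) =
        γ * ∑ s', (∑ a, φ u s a * P s a s') * (∑ u', α s' u' * (QHb s' u' - F s' u')) := by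
      intro s u
      rw [hQHb s u, hF s u]
      simp only [mul_sub, Finset.sum_sub_distrib]
      ring
    have h1 := key (fun s u => QHb s u - F s u) hrec
    have h2 := key (fun s u => F s u - QHb s u) (by
      intro s u
      have := hrec s u
      have expand : ∑ s', (∑ a, φ u s a * P s a s') * (∑ u', α s' u' * (F s' u' - QHb s' u'))
          = - ∑ s', (∑ a, φ u s a * P s a s') * (∑ u', α s' u' * (QHb s' u' - F s' u')) := by
        rw [← Finset.sum_neg_distrib]
        refine Finset.sum_congr rfl fun s' _ => ?_
        rw [← mul_neg, ← Finset.sum_neg_distrib]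
        congr 1
        exact Finset.sum_congr rfl fun u' _ => by ring
      rw [expand]; linarith)
    intro s u
    have := h1 s u; have := h2 s u
    linarith
  -- Vb s ≤ ∑ a, πg s a * Qb s a
  have hstep : ∀ s, Vb s ≤ ∑ a, φ (ζg s) s a * Qb s a := by
    intro s
    calc Vb s = ∑ u', α s u' * QHb s u' := by
          rw [← hVbF s]
          exact Finset.sum_congr rfl fun u' _ => by rw [hEq s u']
      _ ≤ ∑ u', α s u' * QHb s (ζg s) :=
          Finset.sum_le_sum fun u' _ =>
            mul_le_mul_of_nonneg_left (hg s u') (hα.1 s u')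
      _ = QHb s (ζg s) := by rw [← Finset.sum_mul, hα.2 s, one_mul]
      _ = ∑ a, φ (ζg s) s a * Qb s a := by rw [hEq s (ζg s)]
  -- one-step inequality for D = Vb - Vg
  have hD : ∀ s, Vb s - Vg s ≤
      γ * ∑ s', (∑ a, φ (ζg s) s a * P s a s') * (Vb s' - Vg s') := by
    intro s
    have e1 : ∑ a, φ (ζg s) s a * Qb s a =
        (∑ a, φ (ζg s) s a * r s a) +
          γ * ∑ s', (∑ a, φ (ζg s) s a * P s a s') * Vb s' := by
      have : ∑ a, φ (ζg s) s a * Qb s a = ∑ a, φ (ζg s) s a *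
          (r s a + γ * ∑ s', P s a s' * ∑ a', (∑ u, α s' u * φ u s' a') * Qb s' a') := by
        exact Finset.sum_congr rfl fun a _ => by rw [← hQb s a]
      rw [this, backup_expand]
    have e2 : Vg s =
        (∑ a, φ (ζg s) s a * r s a) +
          γ * ∑ s', (∑ a, φ (ζg s) s a * P s a s') * Vg s' := by
      have : Vg s = ∑ a, φ (ζg s) s a *
          (r s a + γ * ∑ s', P s a s' * ∑ a', φ (ζg s') s' a' * Qg s' a') := by
        simp only [hVgdef]; exact Finset.sum_congr rfl fun a _ => by rw [← hQg s a]
      rw [this, backup_expand]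
    have h := hstep s
    rw [e1] at h
    have h' : Vb s - Vg s ≤
        γ * ∑ s', (∑ a, φ (ζg s) s a * P s a s') * Vb s' -
        γ * ∑ s', (∑ a, φ (ζg s) s a * P s a s') * Vg s' := by
      linarith [e2]
    calc Vb s - Vg s ≤ _ := h'
      _ = γ * ∑ s', (∑ a, φ (ζg s) s a * P s a s') * (Vb s' - Vg s') := by
          rw [← mul_sub, ← Finset.sum_sub_distrib]
          congr 1
          exact Finset.sum_congr rfl fun s' _ => by ring
  -- contraction on states
  have := contraction_nonpos (T := S) hγ0 hγ1 (fun s => Vb s - Vg s)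
    (fun s s' => ∑ a, φ (ζg s) s a * P s a s')
    (fun s s' => Finset.sum_nonneg fun a _ =>
      mul_nonneg ((hφ (ζg s)).1 s a) (hP.1 s a s'))
    (fun s => by
      rw [Finset.sum_comm]
      have : ∀ a, ∑ s', φ (ζg s) s a * P s a s' = φ (ζg s) s a := by
        intro a; rw [← Finset.mul_sum, hP.2 s a, mul_one]
      simp only [this, (hφ (ζg s)).2 s])
    hD
  intro s
  have := this s
  linarith
end

section
/- The greedy composite policy achieves one-step improvement over the behaviour policy with respect to the behaviour policy's action-value function: for every state s ∈ S, ∑_{a∈A} π_g s a · Q^{π_b} s a ≥ ∑_{a∈A} π_b s a · Q^{π_b} s a (i.e., ≥ V^{π_b} s). -/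
open Finset

/-- one-step improvement of the greedy composite policy over the behaviour
policy with respect to the behaviour policy's action-value function. -/
theorem greedy_one_step_improvement
    {S A : Type*} [Fintype S] [Fintype A] [Nonempty S] [Nonempty A]
    (P : S → A → S → ℝ) (r : S → A → ℝ) (γ : ℝ)
    (hP : IsKernel P) (hγ0 : 0 ≤ γ) (hγ1 : γ < 1)
    {M : ℕ} (hM : 1 ≤ M)
    (φ : Fin M → S → A → ℝ) (hφ : ∀ u, IsPolicy (φ u))
    (α : S → Fin M → ℝ) (hα : IsPolicy α)
    (QHb : S → Fin M → ℝ) (hQHb : IsHyperBellmanQ P r γ φ α QHb)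
    (ζg : S → Fin M) (hg : ∀ s u, QHb s u ≤ QHb s (ζg s))
    (Qb : S → A → ℝ)
    (hQb : IsBellmanQ P r γ (fun s a => ∑ u, α s u * φ u s a) Qb) :
    ∀ s, ∑ a, (∑ u, α s u * φ u s a) * Qb s a ≤ ∑ a, φ (ζg s) s a * Qb s a := by
  classical
  haveI : Nonempty (Fin M) := ⟨⟨0, hM⟩⟩
  obtain ⟨hPpos, hPsum⟩ := hP
  obtain ⟨hαpos, hαsum⟩ := hα
  set F : S → Fin M → ℝ := fun s u => ∑ a, φ u s a * Qb s a with hFdef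
  have hT : ∀ s', ∑ u', α s' u' * F s' u'
      = ∑ a', (∑ u', α s' u' * φ u' s' a') * Qb s' a' := by
    intro s'
    simp only [hFdef, Finset.mul_sum, Finset.sum_mul]
    rw [Finset.sum_comm]
    simp [mul_assoc]
  have hFbell : ∀ s u, F s u = (∑ a, φ u s a * r s a) +
      γ * ∑ s', (∑ a, φ u s a * P s a s') * (∑ u', α s' u' * F s' u') := by
    intro s u
    have : F s u = ∑ a, φ u s a * (r s a +
        γ * ∑ s', P s a s' * ∑ a', (∑ u', α s' u' * φ u' s' a') * Qb s' a') := by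
      simp only [hFdef]
      refine Finset.sum_congr rfl fun a _ => ?_
      rw [hQb s a]
    rw [this]
    have hexp : ∀ a, φ u s a * (r s a +
        γ * ∑ s', P s a s' * ∑ a', (∑ u', α s' u' * φ u' s' a') * Qb s' a')
        = φ u s a * r s a + γ * ∑ s', (φ u s a * P s a s') *
          ∑ a', (∑ u', α s' u' * φ u' s' a') * Qb s' a' := by
      intro a
      rw [mul_add]
      congr 1
      rw [Finset.mul_sum, Finset.mul_sum, Finset.mul_sum]
      refine Finset.sum_congr rfl fun s' _ => ?_
      ring
    rw [Finset.sum_congr rfl (fun a _ => hexp a), Finset.sum_add_distrib]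
    congr 1
    rw [← Finset.mul_sum, Finset.sum_comm]
    congr 1
    refine Finset.sum_congr rfl fun s' _ => ?_
    rw [hT s', Finset.sum_mul]
  -- D := QHb - F satisfies homogeneous equation, hence is zero
  have hD : ∀ s u, QHb s u - F s u
      = γ * ∑ s', (∑ a, φ u s a * P s a s') *
        (∑ u', α s' u' * (QHb s' u' - F s' u')) := by
    intro s u
    rw [hQHb s u, hFbell s u]
    have : ∀ s', ∑ u', α s' u' * (QHb s' u' - F s' u')
        = (∑ u', α s' u' * QHb s' u') - (∑ u', α s' u' * F s' u') := by
      intro s'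
      rw [← Finset.sum_sub_distrib]
      exact Finset.sum_congr rfl fun u' _ => by ring
    simp only [this, mul_sub, Finset.sum_sub_distrib]
    ring
  have key : ∀ s u, QHb s u = F s u := by
    obtain ⟨⟨s0, u0⟩, _, hmax⟩ := Finset.exists_max_image (Finset.univ : Finset (S × Fin M))
      (fun p => |QHb p.1 p.2 - F p.1 p.2|) ⟨(Classical.arbitrary S, Classical.arbitrary (Fin M)), Finset.mem_univ _⟩
    set m := |QHb s0 u0 - F s0 u0| with hm
    have hbound : ∀ s u, |QHb s u - F s u| ≤ m := fun s u => hmax (s, u) (Finset.mem_univ _)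
    have hφpos := fun u => (hφ u).1
    have hφsum := fun u => (hφ u).2
    have hPHpos : ∀ s u s', 0 ≤ ∑ a, φ u s a * P s a s' := fun s u s' =>
      Finset.sum_nonneg fun a _ => mul_nonneg (hφpos u s a) (hPpos s a s')
    have hPHsum : ∀ s u, ∑ s', ∑ a, φ u s a * P s a s' = 1 := by
      intro s u
      rw [Finset.sum_comm]
      calc ∑ a, ∑ s', φ u s a * P s a s' = ∑ a, φ u s a := by
            refine Finset.sum_congr rfl fun a _ => ?_
            rw [← Finset.mul_sum, hPsum s a, mul_one]
        _ = 1 := hφsum u s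
    have hinner : ∀ s', |∑ u', α s' u' * (QHb s' u' - F s' u')| ≤ m := by
      intro s'
      calc |∑ u', α s' u' * (QHb s' u' - F s' u')|
          ≤ ∑ u', |α s' u' * (QHb s' u' - F s' u')| := Finset.abs_sum_le_sum_abs _ _
        _ ≤ ∑ u', α s' u' * m := by
            refine Finset.sum_le_sum fun u' _ => ?_
            rw [abs_mul, abs_of_nonneg (hαpos s' u')]
            exact mul_le_mul_of_nonneg_left (hbound s' u') (hαpos s' u')
        _ = m := by rw [← Finset.sum_mul, hαsum s', one_mul]
    have hcontr : m ≤ γ * m := by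
      calc m = |QHb s0 u0 - F s0 u0| := hm
        _ = |γ * ∑ s', (∑ a, φ u0 s0 a * P s0 a s') *
              (∑ u', α s' u' * (QHb s' u' - F s' u'))| := by rw [hD s0 u0]
        _ = γ * |∑ s', (∑ a, φ u0 s0 a * P s0 a s') *
              (∑ u', α s' u' * (QHb s' u' - F s' u'))| := by
            rw [abs_mul, abs_of_nonneg hγ0]
        _ ≤ γ * m := by
            refine mul_le_mul_of_nonneg_left ?_ hγ0
            calc |∑ s', (∑ a, φ u0 s0 a * P s0 a s') *
                  (∑ u', α s' u' * (QHb s' u' - F s' u'))|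
                ≤ ∑ s', |(∑ a, φ u0 s0 a * P s0 a s') *
                  (∑ u', α s' u' * (QHb s' u' - F s' u'))| := Finset.abs_sum_le_sum_abs _ _
              _ ≤ ∑ s', (∑ a, φ u0 s0 a * P s0 a s') * m := by
                  refine Finset.sum_le_sum fun s' _ => ?_
                  rw [abs_mul, abs_of_nonneg (hPHpos s0 u0 s')]
                  exact mul_le_mul_of_nonneg_left (hinner s') (hPHpos s0 u0 s')
              _ = m := by rw [← Finset.sum_mul, hPHsum s0 u0, one_mul]
    have hm0 : m ≤ 0 := by nlinarith [abs_nonneg (QHb s0 u0 - F s0 u0)]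
    have hmz : m = 0 := le_antisymm hm0 (abs_nonneg _)
    intro s u
    have := hbound s u
    rw [hmz] at this
    have := abs_nonpos_iff.mp this
    linarith [sub_eq_zero.mp this]
  intro s
  calc ∑ a, (∑ u, α s u * φ u s a) * Qb s a
      = ∑ u, α s u * F s u := (hT s).symm
    _ = ∑ u, α s u * QHb s u := by
        exact Finset.sum_congr rfl fun u _ => by rw [key s u]
    _ ≤ ∑ u, α s u * QHb s (ζg s) := by
        refine Finset.sum_le_sum fun u _ => ?_
        exact mul_le_mul_of_nonneg_left (hg s u) (hαpos s u)
    _ = QHb s (ζg s) := by rw [← Finset.sum_mul, hαsum s, one_mul]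
    _ = F s (ζg s) := key s (ζg s)
    _ = ∑ a, φ (ζg s) s a * Qb s a := rfl
end

section
/- Policy improvement theorem: if two policies π and π' satisfy ∑_{a∈A} π' s a · Q^π s a ≥ V^π s for every state s, then V^{π'} s ≥ V^π s for every state s. -/
open Finset

/-- policy improvement theorem. -/
theorem policy_improvement
    {S A : Type*} [Fintype S] [Fintype A] [Nonempty S] [Nonempty A]
    (P : S → A → S → ℝ) (r : S → A → ℝ) (γ : ℝ)
    (hP : IsKernel P) (hγ0 : 0 ≤ γ) (hγ1 : γ < 1)
    (π π' : S → A → ℝ) (hπ : IsPolicy π) (hπ' : IsPolicy π')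
    (Q : S → A → ℝ) (hQ : IsBellmanQ P r γ π Q)
    (Q' : S → A → ℝ) (hQ' : IsBellmanQ P r γ π' Q')
    (h : ∀ s, ∑ a, π s a * Q s a ≤ ∑ a, π' s a * Q s a) :
    ∀ s, ∑ a, π s a * Q s a ≤ ∑ a, π' s a * Q' s a := by
  set V : S → ℝ := fun s => ∑ a, π s a * Q s a with hV
  set V' : S → ℝ := fun s => ∑ a, π' s a * Q' s a with hV'
  set g : S → ℝ := fun s => V' s - V s with hg
  -- key inequality: g s ≥ γ * ∑ a π' s a * ∑ s' P s a s' * g s'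
  have key : ∀ s, γ * ∑ a, π' s a * ∑ s', P s a s' * g s' ≤ g s := by
    intro s
    have hdiff : ∀ a, Q' s a - Q s a = γ * ∑ s', P s a s' * g s' := by
      intro a
      rw [hQ' s a, hQ s a]
      simp only [hg, hV, hV', mul_sub, Finset.sum_sub_distrib]
      ring
    have h1 : V' s - ∑ a, π' s a * Q s a = γ * ∑ a, π' s a * ∑ s', P s a s' * g s' := by
      simp only [hV', ← Finset.sum_sub_distrib, ← mul_sub]
      rw [Finset.mul_sum]
      apply Finset.sum_congr rfl
      intro a _
      rw [hdiff a]; ring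
    have h2 : V s ≤ ∑ a, π' s a * Q s a := h s
    simp only [hg]
    linarith
  -- minimum of g
  obtain ⟨s₀, -, hmin⟩ := Finset.exists_min_image Finset.univ g ⟨Classical.arbitrary S, Finset.mem_univ _⟩
  have hmin' : ∀ s, g s₀ ≤ g s := fun s => hmin s (Finset.mem_univ s)
  have hnn : 0 ≤ g s₀ := by
    have hb : g s₀ ≤ ∑ a, π' s₀ a * ∑ s', P s₀ a s' * g s' := by
      calc g s₀ = ∑ a, π' s₀ a * g s₀ := by
            rw [← Finset.sum_mul, hπ'.2 s₀, one_mul]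
        _ ≤ ∑ a, π' s₀ a * ∑ s', P s₀ a s' * g s' := by
            apply Finset.sum_le_sum
            intro a _
            apply mul_le_mul_of_nonneg_left _ (hπ'.1 s₀ a)
            calc g s₀ = ∑ s', P s₀ a s' * g s₀ := by
                  rw [← Finset.sum_mul, hP.2 s₀ a, one_mul]
              _ ≤ ∑ s', P s₀ a s' * g s' := by
                  apply Finset.sum_le_sum
                  intro s' _
                  exact mul_le_mul_of_nonneg_left (hmin' s') (hP.1 s₀ a s')
    have h3 := key s₀
    nlinarith [mul_le_mul_of_nonneg_left hb hγ0]
  intro s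
  have := hmin' s
  simp only [hg, hV, hV'] at *
  linarith [this, hnn]
end

section
/- Monotone reweighting lemma: let π and π̃ be policies and suppose there exist a strictly increasing function g : ℝ → ℝ and a function h : S → ℝ → ℝ such that h s is monotonically increasing (non-decreasing) for every s, and g (π̃ s a) = g (π s a) + h s (A^π s a) for all s ∈ S and a ∈ A. Then V^{π̃} s ≥ V^π s for every state s. -/
open Finset

/-- monotone reweighting lemma. -/
theorem monotone_reweighting
    {S A : Type*} [Fintype S] [Fintype A] [Nonempty S] [Nonempty A]
    (P : S → A → S → ℝ) (r : S → A → ℝ) (γ : ℝ)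
    (hP : IsKernel P) (hγ0 : 0 ≤ γ) (hγ1 : γ < 1)
    (π πt : S → A → ℝ) (hπ : IsPolicy π) (hπt : IsPolicy πt)
    (Q : S → A → ℝ) (hQ : IsBellmanQ P r γ π Q)
    (Qt : S → A → ℝ) (hQt : IsBellmanQ P r γ πt Qt)
    (g : ℝ → ℝ) (hgmono : StrictMono g)
    (h : S → ℝ → ℝ) (hh : ∀ s, Monotone (h s))
    (hrel : ∀ s a, g (πt s a) = g (π s a) + h s (Q s a - ∑ a', π s a' * Q s a')) :
    ∀ s, ∑ a, π s a * Q s a ≤ ∑ a, πt s a * Qt s a := by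
  obtain ⟨hP1, hP2⟩ := hP
  obtain ⟨hπ1, hπ2⟩ := hπ
  obtain ⟨hπt1, hπt2⟩ := hπt
  classical
  -- Step 1: one-step improvement
  have step1 : ∀ s, ∑ a, π s a * Q s a ≤ ∑ a, πt s a * Q s a := by
    intro s
    set Vs : ℝ := ∑ a', π s a' * Q s a' with hVs
    set Adv : A → ℝ := fun a => Q s a - Vs with hAdv
    have hga : ∀ a, g (πt s a) = g (π s a) + h s (Adv a) := fun a => hrel s a
    have hlt : ∀ a b, h s (Adv a) < 0 → 0 < h s (Adv b) → Adv a ≤ Adv b := by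
      intro a b ha hb
      by_contra hab
      push_neg at hab
      have := hh s hab.le
      linarith
    obtain ⟨c, hpt⟩ : ∃ c : ℝ, ∀ a, 0 ≤ (πt s a - π s a) * (Adv a - c) := by
      by_cases hT : (univ.filter fun a => 0 < h s (Adv a)).Nonempty
      · refine ⟨(univ.filter fun a => 0 < h s (Adv a)).inf' hT Adv, fun a => ?_⟩
        rcases lt_trichotomy (h s (Adv a)) 0 with h0 | h0 | h0
        · have h1 : πt s a < π s a := hgmono.lt_iff_lt.mp (by linarith [hga a])
          have h2 : Adv a ≤ (univ.filter fun a => 0 < h s (Adv a)).inf' hT Adv := by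
            apply Finset.le_inf'
            intro b hb
            rw [mem_filter] at hb
            exact hlt a b h0 hb.2
          nlinarith
        · have h1 : πt s a = π s a := hgmono.injective (by rw [hga a, h0, add_zero])
          rw [h1]; simp
        · have h1 : π s a < πt s a := hgmono.lt_iff_lt.mp (by linarith [hga a])
          have h2 : (univ.filter fun a => 0 < h s (Adv a)).inf' hT Adv ≤ Adv a :=
            Finset.inf'_le _ (mem_filter.mpr ⟨mem_univ a, h0⟩)
          nlinarith
      · refine ⟨univ.sup' univ_nonempty Adv, fun a => ?_⟩
        have hha : h s (Adv a) ≤ 0 := by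
          by_contra hc'
          push_neg at hc'
          exact hT ⟨a, mem_filter.mpr ⟨mem_univ a, hc'⟩⟩
        have h1 : πt s a ≤ π s a := hgmono.le_iff_le.mp (by linarith [hga a])
        have h2 : Adv a ≤ univ.sup' univ_nonempty Adv := Finset.le_sup' Adv (mem_univ a)
        nlinarith
    have hsum : 0 ≤ ∑ a, (πt s a - π s a) * (Adv a - c) :=
      Finset.sum_nonneg fun a _ => hpt a
    have h0 : ∑ a, (πt s a - π s a) * (Vs + c) = 0 := by
      rw [← Finset.sum_mul]
      have : ∑ a, (πt s a - π s a) = 0 := by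
        rw [Finset.sum_sub_distrib, hπt2 s, hπ2 s]; ring
      rw [this, zero_mul]
    have hexp : ∑ a, (πt s a - π s a) * (Adv a - c)
        = (∑ a, πt s a * Q s a) - ∑ a, π s a * Q s a := by
      calc ∑ a, (πt s a - π s a) * (Adv a - c)
          = ∑ a, ((πt s a * Q s a - π s a * Q s a) - (πt s a - π s a) * (Vs + c)) := by
            apply Finset.sum_congr rfl
            intro a _
            simp only [hAdv]; ring
        _ = ((∑ a, πt s a * Q s a) - ∑ a, π s a * Q s a)
              - ∑ a, (πt s a - π s a) * (Vs + c) := by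
            rw [Finset.sum_sub_distrib, Finset.sum_sub_distrib]
        _ = (∑ a, πt s a * Q s a) - ∑ a, π s a * Q s a := by rw [h0]; ring
    linarith [hexp ▸ hsum]
  -- difference function
  set D : S → ℝ := fun s => (∑ a, πt s a * Qt s a) - ∑ a, π s a * Q s a with hD
  have hQdiff : ∀ s a, Qt s a - Q s a = γ * ∑ s', P s a s' * D s' := by
    intro s a
    rw [hQt s a, hQ s a]
    have : ∑ s', P s a s' * D s'
        = (∑ s', P s a s' * ∑ a', πt s' a' * Qt s' a')
          - ∑ s', P s a s' * ∑ a', π s' a' * Q s' a' := by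
      rw [← Finset.sum_sub_distrib]
      apply Finset.sum_congr rfl
      intro s' _
      simp only [hD]; ring
    rw [this]; ring
  -- key recursive inequality
  have hrec : ∀ s, γ * ∑ a, πt s a * ∑ s', P s a s' * D s' ≤ D s := by
    intro s
    have e1 : ∑ a, πt s a * (Qt s a - Q s a) = γ * ∑ a, πt s a * ∑ s', P s a s' * D s' := by
      rw [Finset.mul_sum]
      apply Finset.sum_congr rfl
      intro a _
      rw [hQdiff s a]; ring
    have e2 : ∑ a, πt s a * (Qt s a - Q s a)
        = (∑ a, πt s a * Qt s a) - ∑ a, πt s a * Q s a := by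
      rw [← Finset.sum_sub_distrib]
      apply Finset.sum_congr rfl
      intro a _; ring
    have := step1 s
    simp only [hD]
    linarith [e1, e2]
  -- minimum argument
  obtain ⟨s₀, _, hs₀⟩ := Finset.exists_min_image Finset.univ D ⟨Classical.arbitrary S, mem_univ _⟩
  have hs₀' : ∀ s, D s₀ ≤ D s := fun s => hs₀ s (mem_univ s)
  have hmin : 0 ≤ D s₀ := by
    by_contra hneg
    push_neg at hneg
    have hb1 : ∀ a, D s₀ ≤ ∑ s', P s₀ a s' * D s' := by
      intro a
      calc D s₀ = ∑ s', P s₀ a s' * D s₀ := by rw [← Finset.sum_mul, hP2 s₀ a, one_mul]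
        _ ≤ ∑ s', P s₀ a s' * D s' := by
            apply Finset.sum_le_sum
            intro s' _
            exact mul_le_mul_of_nonneg_left (hs₀' s') (hP1 s₀ a s')
    have hb2 : D s₀ ≤ ∑ a, πt s₀ a * ∑ s', P s₀ a s' * D s' := by
      calc D s₀ = ∑ a, πt s₀ a * D s₀ := by rw [← Finset.sum_mul, hπt2 s₀, one_mul]
        _ ≤ ∑ a, πt s₀ a * ∑ s', P s₀ a s' * D s' := by
            apply Finset.sum_le_sum
            intro a _
            exact mul_le_mul_of_nonneg_left (hb1 a) (hπt1 s₀ a)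
    have := hrec s₀
    nlinarith
  intro s
  have := hs₀' s
  simp only [hD] at this hmin ⊢
  linarith
end

section
/- The LOM policy is at least as good as both the greedy composite policy and the behaviour policy: for every state s ∈ S, V^{π_L} s ≥ V^{π_g} s ≥ V^{π_b} s. -/
open Finset

lemma bellman_mono {S A : Type*} [Fintype S] [Fintype A] [Nonempty S] [Nonempty A]
    (P : S → A → S → ℝ) (r : S → A → ℝ) (γ : ℝ)
    (hP : IsKernel P) (hγ0 : 0 ≤ γ) (hγ1 : γ < 1)
    (π1 π2 : S → A → ℝ) (hπ2 : IsPolicy π2)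
    (Q1 Q2 : S → A → ℝ)
    (h1 : IsBellmanQ P r γ π1 Q1) (h2 : IsBellmanQ P r γ π2 Q2)
    (himp : ∀ s, ∑ a, π1 s a * Q1 s a ≤ ∑ a, π2 s a * Q1 s a) :
    ∀ s a, Q1 s a ≤ Q2 s a := by
  obtain ⟨p, -, hp⟩ := Finset.exists_min_image (univ : Finset (S × A))
    (fun q => Q2 q.1 q.2 - Q1 q.1 q.2) univ_nonempty
  set m := Q2 p.1 p.2 - Q1 p.1 p.2 with hm
  have hple : ∀ s a, m ≤ Q2 s a - Q1 s a := fun s a => hp (s, a) (mem_univ _)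
  have hinner : ∀ s', m ≤ (∑ a', π2 s' a' * Q2 s' a') - (∑ a', π1 s' a' * Q1 s' a') := by
    intro s'
    have e1 : ∑ a', π2 s' a' * m = m := by rw [← Finset.sum_mul, hπ2.2, one_mul]
    have e2 : ∑ a', π2 s' a' * m ≤ ∑ a', π2 s' a' * (Q2 s' a' - Q1 s' a') :=
      Finset.sum_le_sum fun a _ => mul_le_mul_of_nonneg_left (hple s' a) (hπ2.1 s' a)
    have e3 : ∑ a', π2 s' a' * (Q2 s' a' - Q1 s' a')
        = (∑ a', π2 s' a' * Q2 s' a') - (∑ a', π2 s' a' * Q1 s' a') := by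
      rw [← Finset.sum_sub_distrib]; exact Finset.sum_congr rfl fun a _ => by ring
    have := himp s'
    linarith [e2.trans_eq e3]
  have hkey : γ * m ≤ m := by
    have e1 : ∑ s', P p.1 p.2 s' * m = m := by rw [← Finset.sum_mul, hP.2, one_mul]
    have e2 : ∑ s', P p.1 p.2 s' * m ≤ ∑ s', P p.1 p.2 s' *
        ((∑ a', π2 s' a' * Q2 s' a') - (∑ a', π1 s' a' * Q1 s' a')) :=
      Finset.sum_le_sum fun s' _ => mul_le_mul_of_nonneg_left (hinner s') (hP.1 _ _ s')
    have e3 : ∑ s', P p.1 p.2 s' *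
        ((∑ a', π2 s' a' * Q2 s' a') - (∑ a', π1 s' a' * Q1 s' a'))
        = (∑ s', P p.1 p.2 s' * ∑ a', π2 s' a' * Q2 s' a')
          - (∑ s', P p.1 p.2 s' * ∑ a', π1 s' a' * Q1 s' a') := by
      rw [← Finset.sum_sub_distrib]; exact Finset.sum_congr rfl fun s' _ => by ring
    have hmval : m = γ * ((∑ s', P p.1 p.2 s' * ∑ a', π2 s' a' * Q2 s' a')
          - (∑ s', P p.1 p.2 s' * ∑ a', π1 s' a' * Q1 s' a')) := by
      rw [hm, h2 p.1 p.2, h1 p.1 p.2]; ring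
    have : m ≤ (∑ s', P p.1 p.2 s' * ∑ a', π2 s' a' * Q2 s' a')
          - (∑ s', P p.1 p.2 s' * ∑ a', π1 s' a' * Q1 s' a') := by
      rw [← e1] at *; linarith [e2.trans_eq e3]
    calc γ * m ≤ γ * _ := mul_le_mul_of_nonneg_left this hγ0
      _ = m := hmval.symm
  have hm0 : 0 ≤ m := by nlinarith
  intro s a
  linarith [hple s a]

lemma bellman_unique {S A : Type*} [Fintype S] [Fintype A] [Nonempty S] [Nonempty A]
    (P : S → A → S → ℝ) (r : S → A → ℝ) (γ : ℝ)
    (hP : IsKernel P) (hγ0 : 0 ≤ γ) (hγ1 : γ < 1)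
    (π : S → A → ℝ) (hπ : IsPolicy π)
    (Q1 Q2 : S → A → ℝ)
    (h1 : IsBellmanQ P r γ π Q1) (h2 : IsBellmanQ P r γ π Q2) :
    ∀ s a, Q1 s a = Q2 s a := fun s a =>
  le_antisymm (bellman_mono P r γ hP hγ0 hγ1 π π hπ Q1 Q2 h1 h2 (fun _ => le_refl _) s a)
    (bellman_mono P r γ hP hγ0 hγ1 π π hπ Q2 Q1 h2 h1 (fun _ => le_refl _) s a)

lemma hyper_proj {S A : Type*} [Fintype S] [Fintype A] {M : ℕ}
    (P : S → A → S → ℝ) (r : S → A → ℝ) (γ : ℝ)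
    (φ : Fin M → S → A → ℝ) (ζ : S → Fin M → ℝ) (π : S → A → ℝ)
    (hcomp : ∀ s a, π s a = ∑ u, ζ s u * φ u s a)
    (Q : S → A → ℝ) (hQ : IsBellmanQ P r γ π Q) :
    IsBellmanQ (fun s u s' => ∑ a, φ u s a * P s a s')
      (fun s u => ∑ a, φ u s a * r s a) γ ζ (fun s u => ∑ a, φ u s a * Q s a) := by
  intro s u
  have hV : ∀ s', (∑ u', ζ s' u' * ∑ a, φ u' s' a * Q s' a)
      = ∑ a', π s' a' * Q s' a' := by
    intro s'
    simp only [Finset.mul_sum]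
    rw [Finset.sum_comm]
    refine Finset.sum_congr rfl fun a _ => ?_
    rw [hcomp, Finset.sum_mul]
    exact Finset.sum_congr rfl fun u' _ => by ring
  simp only [hV]
  calc ∑ a, φ u s a * Q s a
      = ∑ a, φ u s a * (r s a + γ * ∑ s', P s a s' * ∑ a', π s' a' * Q s' a') :=
        Finset.sum_congr rfl fun a _ => by rw [hQ s a]
    _ = (∑ a, φ u s a * r s a)
        + γ * ∑ a, ∑ s', φ u s a * P s a s' * (∑ a', π s' a' * Q s' a') := by
        rw [Finset.mul_sum, ← Finset.sum_add_distrib]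
        refine Finset.sum_congr rfl fun a _ => ?_
        rw [mul_add]
        congr 1
        rw [Finset.mul_sum, Finset.mul_sum, Finset.mul_sum]
        exact Finset.sum_congr rfl fun s' _ => by ring
    _ = (∑ a, φ u s a * r s a)
        + γ * ∑ s', (∑ a, φ u s a * P s a s') * (∑ u', π s' u' * Q s' u') := by
        rw [Finset.sum_comm]
        congr 1; congr 1
        exact Finset.sum_congr rfl fun s' _ => by rw [Finset.sum_mul]

set_option maxHeartbeats 2000000 in
/-- the LOM policy is at least as good as both the greedy composite policy
and the behaviour policy: `V^{π_L} s ≥ V^{π_g} s ≥ V^{π_b} s`. -/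
theorem lom_policy_improvement
    {S A : Type*} [Fintype S] [Fintype A] [Nonempty S] [Nonempty A]
    (P : S → A → S → ℝ) (r : S → A → ℝ) (γ : ℝ)
    (hP : IsKernel P) (hγ0 : 0 ≤ γ) (hγ1 : γ < 1)
    {M : ℕ} (hM : 1 ≤ M)
    (φ : Fin M → S → A → ℝ) (hφ : ∀ u, IsPolicy (φ u))
    (α : S → Fin M → ℝ) (hα : IsPolicy α)
    (QHb : S → Fin M → ℝ) (hQHb : IsHyperBellmanQ P r γ φ α QHb)
    (ζg : S → Fin M) (hg : ∀ s u, QHb s u ≤ QHb s (ζg s))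
    (Qg : S → A → ℝ) (hQg : IsBellmanQ P r γ (fun s a => φ (ζg s) s a) Qg)
    (Qb : S → A → ℝ)
    (hQb : IsBellmanQ P r γ (fun s a => ∑ u, α s u * φ u s a) Qb)
    (Ag : S → A → ℝ) (hAg : ∀ s a, Ag s a = Qg s a - ∑ a', φ (ζg s) s a' * Qg s a')
    (β : ℝ) (hβ : 0 < β)
    (Z : S → ℝ) (hZ : ∀ s, Z s = ∑ a', φ (ζg s) s a' * Real.exp (Ag s a' / β))
    (πL : S → A → ℝ)
    (hπL : ∀ s a, πL s a = φ (ζg s) s a * Real.exp (Ag s a / β) / Z s)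
    (QL : S → A → ℝ) (hQL : IsBellmanQ P r γ πL QL) :
    ∀ s, (∑ a, φ (ζg s) s a * Qg s a ≤ ∑ a, πL s a * QL s a) ∧
         (∑ a, (∑ u, α s u * φ u s a) * Qb s a ≤ ∑ a, φ (ζg s) s a * Qg s a) := by
  classical
  have hFinM : Nonempty (Fin M) := ⟨⟨0, hM⟩⟩
  -- hyper MDP data
  set P' : S → Fin M → S → ℝ := fun s u s' => ∑ a, φ u s a * P s a s' with hP'def
  have hP'k : IsKernel P' := by
    constructor
    · exact fun s u s' => Finset.sum_nonneg fun a _ =>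
        mul_nonneg ((hφ u).1 s a) (hP.1 s a s')
    · intro s u
      rw [Finset.sum_comm]
      calc ∑ a, ∑ s', φ u s a * P s a s'
          = ∑ a, φ u s a * ∑ s', P s a s' := by
            exact Finset.sum_congr rfl fun a _ => (Finset.mul_sum _ _ _).symm
        _ = ∑ a, φ u s a := by
            exact Finset.sum_congr rfl fun a _ => by rw [hP.2 s a, mul_one]
        _ = 1 := (hφ u).2 s
  -- deterministic greedy hyper policy
  set ζG : S → Fin M → ℝ := fun s u => if u = ζg s then 1 else 0 with hζGdef
  have hζGpol : IsPolicy ζG := by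
    constructor
    · intro s u; by_cases h : u = ζg s <;> simp [hζGdef, h]
    · intro s; simp [hζGdef]
  -- behaviour and greedy composite policies
  have hπbpol : IsPolicy (fun s a => ∑ u, α s u * φ u s a) := by
    constructor
    · exact fun s a => Finset.sum_nonneg fun u _ => mul_nonneg (hα.1 s u) ((hφ u).1 s a)
    · intro s
      rw [Finset.sum_comm]
      calc ∑ u, ∑ a, α s u * φ u s a = ∑ u, α s u * ∑ a, φ u s a := by
            exact Finset.sum_congr rfl fun u _ => (Finset.mul_sum _ _ _).symm
        _ = ∑ u, α s u := Finset.sum_congr rfl fun u _ => by rw [(hφ u).2 s, mul_one]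
        _ = 1 := hα.2 s
  have hπgpol : IsPolicy (fun s a => φ (ζg s) s a) :=
    ⟨fun s a => (hφ (ζg s)).1 s a, fun s => (hφ (ζg s)).2 s⟩
  -- hyper Bellman facts
  have hQHb' : IsBellmanQ P' (fun s u => ∑ a, φ u s a * r s a) γ α QHb := hQHb
  have hBb : IsBellmanQ P' (fun s u => ∑ a, φ u s a * r s a) γ α
      (fun s u => ∑ a, φ u s a * Qb s a) :=
    hyper_proj P r γ φ α _ (fun s a => rfl) Qb hQb
  have hBg : IsBellmanQ P' (fun s u => ∑ a, φ u s a * r s a) γ ζG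
      (fun s u => ∑ a, φ u s a * Qg s a) := by
    refine hyper_proj P r γ φ ζG _ ?_ Qg hQg
    intro s a
    simp [hζGdef, ite_mul]
  -- uniqueness: QHb s u = ∑ a, φ u s a * Qb s a
  have hQHbeq : ∀ s u, QHb s u = ∑ a, φ u s a * Qb s a :=
    bellman_unique P' _ γ hP'k hγ0 hγ1 α hα QHb _ hQHb' hBb
  -- greedy improvement at hyper level
  have himpg : ∀ s, ∑ u, α s u * QHb s u ≤ ∑ u, ζG s u * QHb s u := by
    intro s
    have h2 : ∑ u, ζG s u * QHb s u = QHb s (ζg s) := by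
      simp [hζGdef, ite_mul]
    rw [h2]
    calc ∑ u, α s u * QHb s u ≤ ∑ u, α s u * QHb s (ζg s) :=
          Finset.sum_le_sum fun u _ => mul_le_mul_of_nonneg_left (hg s u) (hα.1 s u)
      _ = QHb s (ζg s) := by rw [← Finset.sum_mul, hα.2, one_mul]
  have hQHle : ∀ s u, QHb s u ≤ ∑ a, φ u s a * Qg s a :=
    bellman_mono P' _ γ hP'k hγ0 hγ1 α ζG hζGpol QHb _ hQHb' hBg himpg
  -- Z positivity and πL is a policy
  have hZpos : ∀ s, 0 < Z s := by
    intro s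
    have h1 : ∑ a, φ (ζg s) s a = 1 := (hφ (ζg s)).2 s
    obtain ⟨a, ha⟩ : ∃ a, 0 < φ (ζg s) s a := by
      by_contra h
      push_neg at h
      have : ∑ a, φ (ζg s) s a ≤ 0 := Finset.sum_nonpos fun a _ => h a
      linarith
    rw [hZ]
    have hpos : 0 < φ (ζg s) s a * Real.exp (Ag s a / β) :=
      mul_pos ha (Real.exp_pos _)
    exact lt_of_lt_of_le hpos (Finset.single_le_sum
      (f := fun a' => φ (ζg s) s a' * Real.exp (Ag s a' / β))
      (fun b _ => mul_nonneg ((hφ _).1 s b) (Real.exp_pos _).le) (mem_univ a))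
  have hπLpol : IsPolicy πL := by
    constructor
    · intro s a
      rw [hπL]
      exact div_nonneg (mul_nonneg ((hφ _).1 s a) (Real.exp_pos _).le) (hZpos s).le
    · intro s
      have : ∑ a, πL s a = (∑ a, φ (ζg s) s a * Real.exp (Ag s a / β)) / Z s := by
        rw [Finset.sum_div]
        exact Finset.sum_congr rfl fun a _ => hπL s a
      rw [this, ← hZ, div_self (hZpos s).ne']
  -- key LOM inequality: ∑ πg Qg ≤ ∑ πL Qg
  have hxexp : ∀ x : ℝ, x ≤ x * Real.exp (x / β) := by
    intro x
    rcases le_or_gt 0 x with hx | hx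
    · nlinarith [Real.one_le_exp (div_nonneg hx hβ.le)]
    · have : Real.exp (x / β) ≤ 1 := Real.exp_le_one_iff.mpr
        (div_nonpos_of_nonpos_of_nonneg hx.le hβ.le)
      nlinarith
  have himpL : ∀ s, ∑ a, φ (ζg s) s a * Qg s a ≤ ∑ a, πL s a * Qg s a := by
    intro s
    set V := ∑ a, φ (ζg s) s a * Qg s a with hV
    have hsumA : ∑ a, φ (ζg s) s a * Ag s a = 0 := by
      have : ∑ a, φ (ζg s) s a * Ag s a
          = (∑ a, φ (ζg s) s a * Qg s a) - (∑ a, φ (ζg s) s a) * V := by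
        rw [Finset.sum_mul, ← Finset.sum_sub_distrib]
        exact Finset.sum_congr rfl fun a _ => by rw [hAg]; ring
      rw [this, (hφ (ζg s)).2 s, one_mul, ← hV, sub_self]
    have hA0 : 0 ≤ ∑ a, πL s a * Ag s a := by
      have hterm : ∀ a, φ (ζg s) s a * Ag s a / Z s ≤ πL s a * Ag s a := by
        intro a
        rw [hπL]
        rw [div_mul_eq_mul_div, div_le_div_iff_of_pos_right (hZpos s)]
        calc φ (ζg s) s a * Ag s a
            ≤ φ (ζg s) s a * (Ag s a * Real.exp (Ag s a / β)) :=
              mul_le_mul_of_nonneg_left (hxexp (Ag s a)) ((hφ _).1 s a)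
          _ = φ (ζg s) s a * Real.exp (Ag s a / β) * Ag s a := by ring
      calc (0:ℝ) = (∑ a, φ (ζg s) s a * Ag s a) / Z s := by rw [hsumA, zero_div]
        _ = ∑ a, φ (ζg s) s a * Ag s a / Z s := Finset.sum_div _ _ _
        _ ≤ ∑ a, πL s a * Ag s a := Finset.sum_le_sum fun a _ => hterm a
    have hsplit : ∑ a, πL s a * Qg s a = (∑ a, πL s a * Ag s a) + V := by
      have : ∑ a, πL s a * Qg s a = ∑ a, (πL s a * Ag s a + πL s a * V) := by
        exact Finset.sum_congr rfl fun a _ => by rw [hAg]; ring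
      rw [this, Finset.sum_add_distrib, ← Finset.sum_mul, hπLpol.2, one_mul]
    linarith
  have hQgle : ∀ s a, Qg s a ≤ QL s a :=
    bellman_mono P r γ hP hγ0 hγ1 _ πL hπLpol Qg QL hQg hQL himpL
  -- conclude
  intro s
  constructor
  · calc ∑ a, φ (ζg s) s a * Qg s a
        ≤ ∑ a, πL s a * Qg s a := himpL s
      _ ≤ ∑ a, πL s a * QL s a :=
        Finset.sum_le_sum fun a _ => mul_le_mul_of_nonneg_left (hQgle s a) (hπLpol.1 s a)
  · have hswap : ∑ a, (∑ u, α s u * φ u s a) * Qb s a = ∑ u, α s u * QHb s u := by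
      calc ∑ a, (∑ u, α s u * φ u s a) * Qb s a
          = ∑ a, ∑ u, α s u * (φ u s a * Qb s a) := by
            refine Finset.sum_congr rfl fun a _ => ?_
            rw [Finset.sum_mul]
            exact Finset.sum_congr rfl fun u _ => by ring
        _ = ∑ u, α s u * ∑ a, φ u s a * Qb s a := by
            rw [Finset.sum_comm]
            exact Finset.sum_congr rfl fun u _ => (Finset.mul_sum _ _ _).symm
        _ = ∑ u, α s u * QHb s u :=
            Finset.sum_congr rfl fun u _ => by rw [hQHbeq]
    have h2 : ∑ u, ζG s u * QHb s u = QHb s (ζg s) := by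
      simp [hζGdef, ite_mul]
    rw [hswap]
    exact (himpg s).trans (h2.le.trans (hQHle s (ζg s)))
end

section
/- Lower bound on the improvement of the LOM policy over the greedy composite policy: fix an initial state s₀ and assume d_{π_g,s₀} s > 0 for all s ∈ S. Let η̂ = ∑_s d_{π_g,s₀} s · ∑_a π_L s a · A^{π_g} s a, let A_max = max_{s,a} |A^{π_g} s a|, and let KL = ∑_s d_{π_L,s₀} s · log(d_{π_L,s₀} s / d_{π_g,s₀} s) (with 0·log 0 = 0). Then V^{π_L} s₀ − V^{π_g} s₀ ≥ (1/(1−γ)) · η̂ − (A_max/(1−γ)) · √(2 · KL). -/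
open Finset

/-! By the performance difference lemma, `(1 - γ) (V^{π_L} - V^{π_g})(s₀)` is the average of
`∑ₐ π_L(a|s) A^{π_g}(s, a)` under `d_{π_L,s₀}`. These inner averages are bounded by `A_max`, so
replacing `d_{π_L,s₀}` by `d_{π_g,s₀}` costs at most `A_max ‖d_{π_L,s₀} - d_{π_g,s₀}‖₁`, and
Pinsker's inequality bounds the `ℓ¹` distance by `√(2 KL)`. -/

theorem hasDerivAt_log_sub_pade {x : ℝ} (hx : 0 < x) :
    HasDerivAt (fun t => Real.log t - (5 * t ^ 2 - 4 * t - 1) / (2 * t ^ 2 + 4 * t))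
      (4 * (x - 1) ^ 3 / (2 * x ^ 2 + 4 * x) ^ 2) x := by
  have hD : 2 * x ^ 2 + 4 * x ≠ 0 := by positivity
  have hnum : HasDerivAt (fun t : ℝ => 5 * t ^ 2 - 4 * t - 1) (5 * (2 * x) - 4) x :=
    ((((hasDerivAt_pow 2 x).const_mul 5).sub ((hasDerivAt_id' x).const_mul 4)).sub_const
      1).congr_deriv (by norm_num)
  have hden : HasDerivAt (fun t : ℝ => 2 * t ^ 2 + 4 * t) (2 * (2 * x) + 4) x :=
    (((hasDerivAt_pow 2 x).const_mul 2).add ((hasDerivAt_id' x).const_mul 4)).congr_deriv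
      (by norm_num)
  refine ((Real.hasDerivAt_log hx.ne').sub (hnum.div hden hD)).congr_deriv ?_
  field_simp
  ring

/-- `log t` minus the rational function decreases on `(0, 1]`, increases on `[1, ∞)`, and vanishes
at `1`. -/
theorem pade_le_log {t : ℝ} (ht : 0 < t) :
    (5 * t ^ 2 - 4 * t - 1) / (2 * t ^ 2 + 4 * t) ≤ Real.log t := by
  set g : ℝ → ℝ := fun t => Real.log t - (5 * t ^ 2 - 4 * t - 1) / (2 * t ^ 2 + 4 * t)
  suffices h : g 1 ≤ g t by
    norm_num [g] at h
    linarith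
  have hcont : ∀ x, 0 < x → ContinuousAt g x := fun x hx =>
    (hasDerivAt_log_sub_pade hx).continuousAt
  rcases le_total 1 t with h1 | h1
  · refine monotoneOn_of_deriv_nonneg (convex_Ici 1)
      (fun x hx => (hcont x (by linarith [hx.out])).continuousWithinAt)
      (fun x hx => ?_) (fun x hx => ?_) Set.self_mem_Ici h1 h1
    all_goals rw [interior_Ici] at hx
    · exact (hasDerivAt_log_sub_pade (by linarith [hx.out])).differentiableAt.differentiableWithinAt
    · rw [(hasDerivAt_log_sub_pade (by linarith [hx.out])).deriv]
      have : 0 ≤ x - 1 := by linarith [hx.out]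
      positivity
  · refine antitoneOn_of_deriv_nonpos (convex_Ioc 0 1)
      (fun x hx => (hcont x hx.1).continuousWithinAt)
      (fun x hx => ?_) (fun x hx => ?_) ⟨ht, h1⟩ ⟨one_pos, le_rfl⟩ h1
    all_goals rw [interior_Ioc] at hx
    · exact (hasDerivAt_log_sub_pade hx.1).differentiableAt.differentiableWithinAt
    · rw [(hasDerivAt_log_sub_pade hx.1).deriv]
      apply div_nonpos_of_nonpos_of_nonneg _ (sq_nonneg _)
      have : x - 1 ≤ 0 := by linarith [hx.2]
      nlinarith [pow_two_nonneg (x - 1)]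

theorem three_mul_sq_div_le_mul_log {x y : ℝ} (hx : 0 ≤ x) (hy : 0 < y) :
    3 * (x - y) ^ 2 / (2 * x + 4 * y) ≤ x * Real.log (x / y) - x + y := by
  rcases hx.eq_or_lt with rfl | hx
  · rw [div_le_iff₀ (by positivity)]
    nlinarith
  have hlog := mul_le_mul_of_nonneg_left (pade_le_log (div_pos hx hy)) hx.le
  have hid : x * ((5 * (x / y) ^ 2 - 4 * (x / y) - 1) / (2 * (x / y) ^ 2 + 4 * (x / y))) - x + y =
      3 * (x - y) ^ 2 / (2 * x + 4 * y) := by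
    field_simp
    ring
  linarith

/-- Pinsker's inequality: Cauchy–Schwarz with weights `(2p + 4q)/3` and
`three_mul_sq_div_le_mul_log`. -/
theorem sum_abs_sub_le_sqrt_two_mul_sum_mul_log {ι : Type*} [Fintype ι] {p q : ι → ℝ}
    (hp : ∀ i, 0 ≤ p i) (hq : ∀ i, 0 < q i) (hp1 : ∑ i, p i = 1) (hq1 : ∑ i, q i = 1) :
    ∑ i, |p i - q i| ≤ Real.sqrt (2 * ∑ i, p i * Real.log (p i / q i)) := by
  set w : ι → ℝ := fun i => (2 * p i + 4 * q i) / 3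
  have hw : ∀ i ∈ univ, 0 < w i := fun i _ => by have := hp i; have := hq i; positivity
  have hw2 : ∑ i, w i = 2 := by
    simp only [w, ← sum_div, sum_add_distrib, ← mul_sum, hp1, hq1]
    norm_num
  have hcs := sq_sum_div_le_sum_sq_div univ (fun i => |p i - q i|) hw
  have hpt : ∑ i, |p i - q i| ^ 2 / w i ≤ ∑ i, p i * Real.log (p i / q i) :=
    calc ∑ i, |p i - q i| ^ 2 / w i
        ≤ ∑ i, (p i * Real.log (p i / q i) - p i + q i) := sum_le_sum fun i _ => by
          simpa only [w, sq_abs, div_div_eq_mul_div, mul_comm] using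
            three_mul_sq_div_le_mul_log (hp i) (hq i)
      _ = ∑ i, p i * Real.log (p i / q i) := by
          rw [sum_add_distrib, sum_sub_distrib, hp1, hq1]
          ring
  rw [hw2, div_le_iff₀ two_pos] at hcs
  exact Real.le_sqrt_of_sq_le (by linarith)

theorem abs_sum_mul_le_of_abs_le {ι : Type*} [Fintype ι] {w f : ι → ℝ} {B : ℝ}
    (hw : ∀ i, 0 ≤ w i) (hw1 : ∑ i, w i = 1) (hf : ∀ i, |f i| ≤ B) : |∑ i, w i * f i| ≤ B :=
  calc |∑ i, w i * f i| ≤ ∑ i, w i * |f i| := by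
        refine (abs_sum_le_sum_abs _ _).trans_eq (sum_congr rfl fun i _ => ?_)
        rw [abs_mul, abs_of_nonneg (hw i)]
    _ ≤ ∑ i, w i * B := sum_le_sum fun i _ => mul_le_mul_of_nonneg_left (hf i) (hw i)
    _ = B := by rw [← Finset.sum_mul, hw1, one_mul]

theorem abs_sum_mul_sub_sum_mul_le {ι : Type*} [Fintype ι] (p q : ι → ℝ) {f : ι → ℝ} {B : ℝ}
    (hf : ∀ i, |f i| ≤ B) : |∑ i, p i * f i - ∑ i, q i * f i| ≤ B * ∑ i, |p i - q i| :=
  calc |∑ i, p i * f i - ∑ i, q i * f i| = |∑ i, (p i - q i) * f i| := by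
        simp only [sub_mul, sum_sub_distrib]
    _ ≤ ∑ i, |p i - q i| * B := by
        refine (abs_sum_le_sum_abs _ _).trans (sum_le_sum fun i _ => ?_)
        rw [abs_mul]
        exact mul_le_mul_of_nonneg_left (hf i) (abs_nonneg _)
    _ = B * ∑ i, |p i - q i| := by rw [mul_sum]; simp only [mul_comm]

theorem IsPolicy.reweight {S A : Type*} [Fintype A] {π : S → A → ℝ} (hπ : IsPolicy π)
    {f : S → A → ℝ} {Z : S → ℝ} (hZ : ∀ s, Z s = ∑ a, π s a * Real.exp (f s a))
    {π' : S → A → ℝ} (hπ' : ∀ s a, π' s a = π s a * Real.exp (f s a) / Z s) : IsPolicy π' := by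
  have hZpos : ∀ s, 0 < Z s := by
    intro s
    obtain ⟨a, -, ha⟩ : ∃ a ∈ univ, (0 : ℝ) < π s a :=
      exists_lt_of_sum_lt (by simp [hπ.2 s])
    rw [hZ]
    exact sum_pos' (fun a _ => mul_nonneg (hπ.1 s a) (Real.exp_pos _).le)
      ⟨a, mem_univ a, mul_pos ha (Real.exp_pos _)⟩
  refine ⟨fun s a => ?_, fun s => ?_⟩
  · rw [hπ']
    exact div_nonneg (mul_nonneg (hπ.1 s a) (Real.exp_pos _).le) (hZpos s).le
  · simp only [hπ', ← sum_div, ← hZ, div_self (hZpos s).ne']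

section Stochastic

variable {S A : Type*} [Fintype S] [Fintype A]

theorem IsKernel.sum_sum_policy_mul {P : S → A → S → ℝ} (hP : IsKernel P) {π : S → A → ℝ}
    (hπ : ∀ s, ∑ a, π s a = 1) (s : S) : ∑ s', ∑ a, π s a * P s a s' = 1 := by
  rw [sum_comm]
  simp only [← mul_sum, hP.2, mul_one, hπ]

theorem IsVisitation.sum_mul {P : S → A → S → ℝ} {γ : ℝ} {π : S → A → ℝ} {s₀ : S} {d : S → ℝ}
    (hd : IsVisitation P γ π s₀ d) (f : S → ℝ) :
    ∑ s', d s' * f s' =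
      (1 - γ) * f s₀ + γ * ∑ s, d s * ∑ s', (∑ a, π s a * P s a s') * f s' := by
  classical
  calc ∑ s', d s' * f s'
      = ∑ s', ((1 - γ) * ((if s' = s₀ then 1 else 0) * f s')
          + γ * ∑ s, d s * ((∑ a, π s a * P s a s') * f s')) :=
        sum_congr rfl fun s' _ => by
          rw [hd s', add_mul, mul_assoc, mul_assoc, Finset.sum_mul]
          simp only [mul_assoc]
    _ = _ := by
        rw [sum_add_distrib, ← mul_sum, ← mul_sum, sum_comm]
        simp [mul_sum]

theorem IsVisitation.sum_eq_one {P : S → A → S → ℝ} {γ : ℝ} {π : S → A → ℝ} {s₀ : S}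
    {d : S → ℝ} (hd : IsVisitation P γ π s₀ d) (hP : IsKernel P) (hπ : ∀ s, ∑ a, π s a = 1)
    (hγ : γ ≠ 1) : ∑ s, d s = 1 := by
  have h := hd.sum_mul 1
  simp only [Pi.one_apply, mul_one, hP.sum_sum_policy_mul hπ] at h
  exact mul_left_cancel₀ (sub_ne_zero.2 hγ.symm) (by linarith : (1 - γ) * ∑ s, d s = (1 - γ) * 1)

theorem nonneg_of_discount_mul_sum_le {K : S → S → ℝ} (hK : ∀ s s', 0 ≤ K s s')
    (hK1 : ∀ s, ∑ s', K s s' = 1) {γ : ℝ} (hγ0 : 0 ≤ γ) (hγ1 : γ < 1) {d : S → ℝ}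
    (hd : ∀ s', γ * ∑ s, d s * K s s' ≤ d s') (s : S) : 0 ≤ d s := by
  -- The negative part `n` of `d` satisfies the same inequality; summed over `s'` it gives
  -- `γ ∑ n ≤ ∑ n`, so the nonpositive sum `∑ n` vanishes.
  set n : S → ℝ := fun s => min (d s) 0
  have hn : ∀ s', γ * ∑ s, n s * K s s' ≤ n s' := fun s' => by
    have hpush : γ * ∑ s, n s * K s s' ≤ γ * ∑ s, d s * K s s' :=
      mul_le_mul_of_nonneg_left
        (sum_le_sum fun s _ => mul_le_mul_of_nonneg_right (min_le_left _ _) (hK s s')) hγ0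
    have hnonpos : γ * ∑ s, n s * K s s' ≤ 0 :=
      mul_nonpos_of_nonneg_of_nonpos hγ0
        (sum_nonpos fun s _ => mul_nonpos_of_nonpos_of_nonneg (min_le_right _ _) (hK s s'))
    exact le_min (hpush.trans (hd s')) hnonpos
  have hsum : γ * ∑ s, n s ≤ ∑ s, n s := by
    calc γ * ∑ s, n s = ∑ s', γ * ∑ s, n s * K s s' := by
          rw [← mul_sum, sum_comm]
          simp only [← Finset.mul_sum, hK1, mul_one]
      _ ≤ ∑ s, n s := sum_le_sum fun s' _ => hn s'
  have hn0 : ∀ s, n s ≤ 0 := fun s => min_le_right _ _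
  have hzero : ∑ s, n s = 0 := by
    nlinarith [sum_nonpos fun s (_ : s ∈ univ) => hn0 s]
  exact min_eq_right_iff.1
    ((sum_eq_zero_iff_of_nonpos fun s _ => hn0 s).1 hzero s (mem_univ s))

theorem IsVisitation.nonneg {P : S → A → S → ℝ} {γ : ℝ} {π : S → A → ℝ} {s₀ : S}
    {d : S → ℝ} (hd : IsVisitation P γ π s₀ d) (hP : IsKernel P) (hπ : IsPolicy π)
    (hγ0 : 0 ≤ γ) (hγ1 : γ < 1) (s : S) : 0 ≤ d s := by
  refine nonneg_of_discount_mul_sum_le (K := fun s s' => ∑ a, π s a * P s a s')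
    (fun s s' => sum_nonneg fun a _ => mul_nonneg (hπ.1 s a) (hP.1 s a s'))
    (hP.sum_sum_policy_mul hπ.2) hγ0 hγ1 (fun s' => ?_) s
  rw [hd s']
  exact le_add_of_nonneg_left (mul_nonneg (sub_nonneg.2 hγ1.le) (by split_ifs <;> norm_num))

theorem IsBellmanQ.sum_mul {P : S → A → S → ℝ} {r : S → A → ℝ} {γ : ℝ} {π : S → A → ℝ}
    {Q : S → A → ℝ} (hQ : IsBellmanQ P r γ π Q) (μ : A → ℝ) (s : S) :
    ∑ a, μ a * Q s a =
      ∑ a, μ a * r s a + γ * ∑ s', (∑ a, μ a * P s a s') * ∑ a', π s' a' * Q s' a' := by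
  have hswap : ∀ f : S → ℝ,
      ∑ a, μ a * ∑ s', P s a s' * f s' = ∑ s', (∑ a, μ a * P s a s') * f s' := fun f => by
    simp only [mul_sum, Finset.sum_mul]
    rw [sum_comm]
    simp only [mul_assoc]
  simp only [hQ s, mul_add, sum_add_distrib, mul_left_comm (μ _) γ, ← mul_sum, hswap]

theorem performance_difference {P : S → A → S → ℝ} {r : S → A → ℝ} {γ : ℝ}
    {π π' : S → A → ℝ} {Q Q' : S → A → ℝ} {s₀ : S} {d : S → ℝ}
    (hQ : IsBellmanQ P r γ π Q) (hQ' : IsBellmanQ P r γ π' Q') (hπ' : ∀ s, ∑ a, π' s a = 1)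
    (hd : IsVisitation P γ π' s₀ d) :
    ∑ s, d s * ∑ a, π' s a * (Q s a - ∑ a', π s a' * Q s a') =
      (1 - γ) * (∑ a, π' s₀ a * Q' s₀ a - ∑ a, π s₀ a * Q s₀ a) := by
  set W : S → ℝ := fun s => ∑ a, π' s a * Q' s a - ∑ a, π s a * Q s a
  have hstep : ∀ s, ∑ a, π' s a * (Q s a - ∑ a', π s a' * Q s a') =
      W s - γ * ∑ s', (∑ a, π' s a * P s a s') * W s' := fun s => by
    simp only [W, mul_sub, sum_sub_distrib, ← Finset.sum_mul, hπ', one_mul,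
      hQ.sum_mul (π' s) s, hQ'.sum_mul (π' s) s]
    ring
  have hW := hd.sum_mul W
  rw [sum_congr rfl fun s _ => by rw [hstep s]]
  simp only [mul_sub, sum_sub_distrib, mul_left_comm _ γ, ← mul_sum]
  linarith

end Stochastic

theorem lom_improvement_lower_bound_general
    {S A : Type*} [Fintype S] [Fintype A] [Nonempty S] [Nonempty A]
    (P : S → A → S → ℝ) (r : S → A → ℝ) (γ : ℝ)
    (hP : IsKernel P) (hγ0 : 0 ≤ γ) (hγ1 : γ < 1)
    {M : ℕ}
    (φ : Fin M → S → A → ℝ) (hφ : ∀ u, IsPolicy (φ u))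
    (ζg : S → Fin M)
    (Qg : S → A → ℝ) (hQg : IsBellmanQ P r γ (fun s a => φ (ζg s) s a) Qg)
    (Ag : S → A → ℝ) (hAg : ∀ s a, Ag s a = Qg s a - ∑ a', φ (ζg s) s a' * Qg s a')
    (β : ℝ)
    (Z : S → ℝ) (hZ : ∀ s, Z s = ∑ a', φ (ζg s) s a' * Real.exp (Ag s a' / β))
    (πL : S → A → ℝ)
    (hπL : ∀ s a, πL s a = φ (ζg s) s a * Real.exp (Ag s a / β) / Z s)
    (QL : S → A → ℝ) (hQL : IsBellmanQ P r γ πL QL)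
    (s₀ : S)
    (dg : S → ℝ) (hdg : IsVisitation P γ (fun s a => φ (ζg s) s a) s₀ dg)
    (dL : S → ℝ) (hdL : IsVisitation P γ πL s₀ dL)
    (hdgpos : ∀ s, 0 < dg s)
    (Amax : ℝ)
    (hAmax : Amax = Finset.univ.sup' Finset.univ_nonempty
      (fun p : S × A => |Ag p.1 p.2|)) :
    (∑ a, πL s₀ a * QL s₀ a) - (∑ a, φ (ζg s₀) s₀ a * Qg s₀ a)
      ≥ (1 / (1 - γ)) * (∑ s, dg s * ∑ a, πL s a * Ag s a)
        - (Amax / (1 - γ)) *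
            Real.sqrt (2 * ∑ s, dL s * Real.log (dL s / dg s)) := by
  have hπg : IsPolicy fun s a => φ (ζg s) s a :=
    ⟨fun s => (hφ (ζg s)).1 s, fun s => (hφ (ζg s)).2 s⟩
  have hπL' : IsPolicy πL := hπg.reweight hZ hπL
  have hAg_le : ∀ s a, |Ag s a| ≤ Amax := fun s a =>
    hAmax ▸ le_sup' (fun p : S × A => |Ag p.1 p.2|) (mem_univ (s, a))
  have hAmax0 : 0 ≤ Amax :=
    (abs_nonneg _).trans (hAg_le (Classical.arbitrary S) (Classical.arbitrary A))
  have hpdl : ∑ s, dL s * ∑ a, πL s a * Ag s a =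
      (1 - γ) * (∑ a, πL s₀ a * QL s₀ a - ∑ a, φ (ζg s₀) s₀ a * Qg s₀ a) := by
    simp only [hAg]
    exact performance_difference hQg hQL hπL'.2 hdL
  have hshift := abs_sum_mul_sub_sum_mul_le dL dg fun s =>
    abs_sum_mul_le_of_abs_le (hπL'.1 s) (hπL'.2 s) (hAg_le s)
  have hpinsker := sum_abs_sub_le_sqrt_two_mul_sum_mul_log (hdL.nonneg hP hπL' hγ0 hγ1) hdgpos
    (hdL.sum_eq_one hP hπL'.2 hγ1.ne) (hdg.sum_eq_one hP hπg.2 hγ1.ne)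
  have h1γ : 0 < 1 - γ := sub_pos.2 hγ1
  rw [ge_iff_le, one_div_mul_eq_div, div_mul_eq_mul_div, div_sub_div_same, div_le_iff₀ h1γ,
    mul_comm _ (1 - γ), ← hpdl]
  linarith [abs_le.1 hshift, mul_le_mul_of_nonneg_left hpinsker hAmax0]

/-- lower bound on the improvement of the LOM policy over the greedy
composite policy. -/
theorem lom_improvement_lower_bound
    {S A : Type*} [Fintype S] [Fintype A] [Nonempty S] [Nonempty A]
    (P : S → A → S → ℝ) (r : S → A → ℝ) (γ : ℝ)
    (hP : IsKernel P) (hγ0 : 0 ≤ γ) (hγ1 : γ < 1)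
    {M : ℕ} (hM : 1 ≤ M)
    (φ : Fin M → S → A → ℝ) (hφ : ∀ u, IsPolicy (φ u))
    (α : S → Fin M → ℝ) (hα : IsPolicy α)
    (QHb : S → Fin M → ℝ) (hQHb : IsHyperBellmanQ P r γ φ α QHb)
    (ζg : S → Fin M) (hg : ∀ s u, QHb s u ≤ QHb s (ζg s))
    (Qg : S → A → ℝ) (hQg : IsBellmanQ P r γ (fun s a => φ (ζg s) s a) Qg)
    (Ag : S → A → ℝ) (hAg : ∀ s a, Ag s a = Qg s a - ∑ a', φ (ζg s) s a' * Qg s a')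
    (β : ℝ) (hβ : 0 < β)
    (Z : S → ℝ) (hZ : ∀ s, Z s = ∑ a', φ (ζg s) s a' * Real.exp (Ag s a' / β))
    (πL : S → A → ℝ)
    (hπL : ∀ s a, πL s a = φ (ζg s) s a * Real.exp (Ag s a / β) / Z s)
    (QL : S → A → ℝ) (hQL : IsBellmanQ P r γ πL QL)
    (s₀ : S)
    (dg : S → ℝ) (hdg : IsVisitation P γ (fun s a => φ (ζg s) s a) s₀ dg)
    (dL : S → ℝ) (hdL : IsVisitation P γ πL s₀ dL)
    (hdgpos : ∀ s, 0 < dg s)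
    (Amax : ℝ)
    (hAmax : Amax = Finset.univ.sup' Finset.univ_nonempty
      (fun p : S × A => |Ag p.1 p.2|)) :
    (∑ a, πL s₀ a * QL s₀ a) - (∑ a, φ (ζg s₀) s₀ a * Qg s₀ a)
      ≥ (1 / (1 - γ)) * (∑ s, dg s * ∑ a, πL s a * Ag s a)
        - (Amax / (1 - γ)) *
            Real.sqrt (2 * ∑ s, dL s * Real.log (dL s / dg s)) :=
  lom_improvement_lower_bound_general P r γ hP hγ0 hγ1 φ hφ ζg Qg hQg Ag hAg β Z hZ πL hπL QL hQL s₀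
    dg hdg dL hdL hdgpos Amax hAmax
end

section
/- Visitation-shift error bound: let π and π̄ be any two policies and s₀ an initial state. Let A_max = max_{s,a} |A^{π̄} s a|. Then |V^π s₀ − V^{π̄} s₀ − (1/(1−γ)) · ∑_s d_{π̄,s₀} s · ∑_a π s a · A^{π̄} s a| ≤ (A_max/(1−γ)) · ∑_s |d_{π,s₀} s − d_{π̄,s₀} s|. -/
open Finset

open Classical in
lemma visit_sum {S : Type*} [Fintype S] (γ : ℝ) (Pp : S → S → ℝ)
    (d : S → ℝ) (s₀ : S)
    (hd : ∀ s', d s' = (1 - γ) * (if s' = s₀ then 1 else 0) + γ * ∑ s, d s * Pp s s')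
    (f : S → ℝ) :
    γ * ∑ s, d s * ∑ s', Pp s s' * f s' = (∑ s, d s * f s) - (1 - γ) * f s₀ := by
  have h1 : ∑ s', d s' * f s' =
      ∑ s', ((1 - γ) * (if s' = s₀ then 1 else 0) + γ * ∑ s, d s * Pp s s') * f s' :=
    Finset.sum_congr rfl fun s' _ => by rw [← hd s']
  rw [h1]
  simp only [add_mul, Finset.sum_add_distrib, mul_ite, ite_mul, mul_one, mul_zero, zero_mul]
  rw [Finset.sum_ite_eq' Finset.univ s₀ (fun x => (1 - γ) * f x)]
  have h2 : ∑ s', (γ * ∑ s, d s * Pp s s') * f s'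
      = γ * ∑ s, d s * ∑ s', Pp s s' * f s' := by
    simp only [Finset.mul_sum, Finset.sum_mul]
    rw [Finset.sum_comm]
    apply Finset.sum_congr rfl; intro s _
    apply Finset.sum_congr rfl; intro s' _
    ring
  rw [h2]
  simp


/-- visitation-shift error bound. -/
theorem visitation_shift_error_bound
    {S A : Type*} [Fintype S] [Fintype A] [Nonempty S] [Nonempty A]
    (P : S → A → S → ℝ) (r : S → A → ℝ) (γ : ℝ)
    (hP : IsKernel P) (hγ0 : 0 ≤ γ) (hγ1 : γ < 1)
    (π πb : S → A → ℝ) (hπ : IsPolicy π) (hπb : IsPolicy πb)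
    (Q : S → A → ℝ) (hQ : IsBellmanQ P r γ π Q)
    (Qb : S → A → ℝ) (hQb : IsBellmanQ P r γ πb Qb)
    (Ab : S → A → ℝ) (hAb : ∀ s a, Ab s a = Qb s a - ∑ a', πb s a' * Qb s a')
    (s₀ : S)
    (d : S → ℝ) (hd : IsVisitation P γ π s₀ d)
    (db : S → ℝ) (hdb : IsVisitation P γ πb s₀ db)
    (Amax : ℝ)
    (hAmax : Amax = Finset.univ.sup' Finset.univ_nonempty
      (fun p : S × A => |Ab p.1 p.2|)) :
    |(∑ a, π s₀ a * Q s₀ a) - (∑ a, πb s₀ a * Qb s₀ a)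
        - (1 / (1 - γ)) * ∑ s, db s * ∑ a, π s a * Ab s a|
      ≤ (Amax / (1 - γ)) * ∑ s, |d s - db s| := by
  classical
  have hd : ∀ s', d s' = (1 - γ) * (if s' = s₀ then 1 else 0) +
      γ * ∑ s, d s * ∑ a, π s a * P s a s' := hd
  obtain ⟨hπ0, hπ1⟩ := hπ
  have h0 : (0:ℝ) < 1 - γ := by linarith
  set V : S → ℝ := fun s => ∑ a, π s a * Q s a with hV
  set Vb : S → ℝ := fun s => ∑ a, πb s a * Qb s a with hVb
  set g : S → ℝ := fun s => ∑ a, π s a * Ab s a with hg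
  set Pp : S → S → ℝ := fun s s' => ∑ a, π s a * P s a s' with hPp
  -- swap helper
  have swap : ∀ (s : S) (f : S → ℝ),
      ∑ a, π s a * ∑ s', P s a s' * f s' = ∑ s', Pp s s' * f s' := by
    intro s f
    simp only [hPp, Finset.mul_sum, Finset.sum_mul]
    rw [Finset.sum_comm]
    apply Finset.sum_congr rfl; intro s' _
    apply Finset.sum_congr rfl; intro a _
    ring
  have hVrec : ∀ s, V s = (∑ a, π s a * r s a) + γ * ∑ s', Pp s s' * V s' := by
    intro s
    have : V s = ∑ a, π s a * (r s a + γ * ∑ s', P s a s' * V s') := by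
      simp only [hV]
      exact Finset.sum_congr rfl fun a _ => by rw [hQ s a]
    rw [this]
    simp only [mul_add, Finset.sum_add_distrib, mul_left_comm _ γ]
    rw [← Finset.mul_sum, swap s V]
  have hWrec : ∀ s, (∑ a, π s a * Qb s a)
      = (∑ a, π s a * r s a) + γ * ∑ s', Pp s s' * Vb s' := by
    intro s
    have : (∑ a, π s a * Qb s a) = ∑ a, π s a * (r s a + γ * ∑ s', P s a s' * Vb s') :=
      Finset.sum_congr rfl fun a _ => by rw [hQb s a]
    rw [this]
    simp only [mul_add, Finset.sum_add_distrib, mul_left_comm _ γ]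
    rw [← Finset.mul_sum, swap s Vb]
  have hgW : ∀ s, g s = (∑ a, π s a * Qb s a) - Vb s := by
    intro s
    simp only [hg]
    have : ∑ a, π s a * Ab s a = ∑ a, (π s a * Qb s a - π s a * Vb s) :=
      Finset.sum_congr rfl fun a _ => by rw [hAb s a]; ring
    rw [this, Finset.sum_sub_distrib, ← Finset.sum_mul, hπ1 s, one_mul]
  -- key PDL
  have key : ∑ s, d s * g s = (1 - γ) * (V s₀ - Vb s₀) := by
    have e1 : ∑ s, d s * g s
        = ∑ s, d s * (V s + γ * ∑ s', Pp s s' * (Vb s' - V s') - Vb s) := by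
      apply Finset.sum_congr rfl; intro s _
      rw [hgW s, hWrec s]
      have := hVrec s
      have e : γ * ∑ s', Pp s s' * (Vb s' - V s')
          = γ * ∑ s', Pp s s' * Vb s' - γ * ∑ s', Pp s s' * V s' := by
        rw [← mul_sub, ← Finset.sum_sub_distrib]
        congr 1; apply Finset.sum_congr rfl; intro s' _; ring
      rw [e]; congr 1; linarith [hVrec s]
    rw [e1]
    have e2 : ∑ s, d s * (V s + γ * ∑ s', Pp s s' * (Vb s' - V s') - Vb s)
        = (∑ s, d s * (V s - Vb s)) + γ * ∑ s, d s * ∑ s', Pp s s' * (Vb s' - V s') := by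
      rw [Finset.mul_sum, ← Finset.sum_add_distrib]
      apply Finset.sum_congr rfl; intro s _; ring
    rw [e2, visit_sum γ Pp d s₀ hd (fun s => Vb s - V s)]
    have e3 : ∑ s, d s * (V s - Vb s) + ∑ s, d s * (Vb s - V s) = 0 := by
      rw [← Finset.sum_add_distrib]
      apply Finset.sum_eq_zero; intro s _; ring
    linarith
  -- rewrite the expression
  have expr : V s₀ - Vb s₀ - (1 / (1 - γ)) * ∑ s, db s * g s
      = (1 / (1 - γ)) * ∑ s, (d s - db s) * g s := by
    have e : ∑ s, (d s - db s) * g s = (∑ s, d s * g s) - ∑ s, db s * g s := by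
      rw [← Finset.sum_sub_distrib]
      apply Finset.sum_congr rfl; intro s _; ring
    rw [e, key]
    field_simp
  rw [expr]
  -- bound
  have hgb : ∀ s, |g s| ≤ Amax := by
    intro s
    calc |g s| ≤ ∑ a, |π s a * Ab s a| := Finset.abs_sum_le_sum_abs _ _
      _ = ∑ a, π s a * |Ab s a| := by
          apply Finset.sum_congr rfl; intro a _
          rw [abs_mul, abs_of_nonneg (hπ0 s a)]
      _ ≤ ∑ a, π s a * Amax := by
          apply Finset.sum_le_sum; intro a _
          exact mul_le_mul_of_nonneg_left (by
            rw [hAmax]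
            exact Finset.le_sup' (fun p : S × A => |Ab p.1 p.2|) (Finset.mem_univ (s, a)))
            (hπ0 s a)
      _ = Amax := by rw [← Finset.sum_mul, hπ1 s, one_mul]
  have hAm0 : 0 ≤ Amax := le_trans (abs_nonneg _) (hgb (Classical.arbitrary S))
  rw [abs_mul, abs_of_nonneg (le_of_lt (one_div_pos.mpr h0))]
  have hb : |∑ s, (d s - db s) * g s| ≤ Amax * ∑ s, |d s - db s| := by
    calc |∑ s, (d s - db s) * g s| ≤ ∑ s, |(d s - db s) * g s| :=
          Finset.abs_sum_le_sum_abs _ _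
      _ ≤ ∑ s, |d s - db s| * Amax := by
          apply Finset.sum_le_sum; intro s _
          rw [abs_mul]
          exact mul_le_mul_of_nonneg_left (hgb s) (abs_nonneg _)
      _ = Amax * ∑ s, |d s - db s| := by rw [← Finset.sum_mul]; ring
  calc (1 / (1 - γ)) * |∑ s, (d s - db s) * g s|
      ≤ (1 / (1 - γ)) * (Amax * ∑ s, |d s - db s|) :=
        mul_le_mul_of_nonneg_left hb (le_of_lt (one_div_pos.mpr h0))
    _ = (Amax / (1 - γ)) * ∑ s, |d s - db s| := by ring
end

section
/- Existence, uniqueness, and normalization of the discounted state-visitation distribution: for every policy π and every initial state s₀ there exists exactly one function d : S → ℝ satisfying d s' = (1−γ)·𝟙[s' = s₀] + γ · ∑_s d s · ∑_a π s a · P s a s' for all s' ∈ S; moreover this d satisfies d s ≥ 0 for all s and ∑_{s∈S} d s = 1. -/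
open Finset

/-- existence, uniqueness, and normalization of the discounted
state-visitation distribution. -/
theorem visitation_exists_unique_normalized
    {S A : Type*} [Fintype S] [Fintype A] [Nonempty S] [Nonempty A]
    (P : S → A → S → ℝ) (r : S → A → ℝ) (γ : ℝ)
    (hP : IsKernel P) (hγ0 : 0 ≤ γ) (hγ1 : γ < 1)
    (π : S → A → ℝ) (hπ : IsPolicy π) (s₀ : S) :
    (∃! d : S → ℝ, IsVisitation P γ π s₀ d) ∧
    ∀ d : S → ℝ, IsVisitation P γ π s₀ d →
      (∀ s, 0 ≤ d s) ∧ ∑ s, d s = 1 := by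
  classical
  obtain ⟨hP0, hP1⟩ := hP
  obtain ⟨hπ0, hπ1⟩ := hπ
  set K : S → S → ℝ := fun s s' => ∑ a, π s a * P s a s' with hKdef
  have hK0 : ∀ s s', 0 ≤ K s s' := fun s s' =>
    Finset.sum_nonneg fun a _ => mul_nonneg (hπ0 s a) (hP0 s a s')
  have hK1 : ∀ s, ∑ s', K s s' = 1 := by
    intro s
    show ∑ s', ∑ a, π s a * P s a s' = 1
    rw [Finset.sum_comm]
    calc ∑ a, ∑ s', π s a * P s a s' = ∑ a, π s a * ∑ s', P s a s' := by
          simp [Finset.mul_sum]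
      _ = 1 := by simp [hP1, hπ1]
  -- Uniqueness of solutions
  have huniq : ∀ d₁ d₂ : S → ℝ, IsVisitation P γ π s₀ d₁ →
      IsVisitation P γ π s₀ d₂ → d₁ = d₂ := by
    intro d₁ d₂ h₁ h₂
    set e : S → ℝ := fun s => d₁ s - d₂ s with hedef
    have he : ∀ s', e s' = γ * ∑ s, e s * K s s' := by
      intro s'
      have h₁' : d₁ s' = (1 - γ) * (if s' = s₀ then 1 else 0)
          + γ * ∑ s, d₁ s * K s s' := h₁ s'
      have h₂' : d₂ s' = (1 - γ) * (if s' = s₀ then 1 else 0)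
          + γ * ∑ s, d₂ s * K s s' := h₂ s'
      have hs : ∑ s, e s * K s s'
          = (∑ s, d₁ s * K s s') - ∑ s, d₂ s * K s s' := by
        rw [← Finset.sum_sub_distrib]
        apply Finset.sum_congr rfl
        intro s _
        show (d₁ s - d₂ s) * K s s' = _
        ring
      show d₁ s' - d₂ s' = _
      rw [hs, h₁', h₂']
      ring
    have hbound : ∑ s', |e s'| ≤ γ * ∑ s, |e s| := by
      calc ∑ s', |e s'| ≤ ∑ s', γ * ∑ s, |e s| * K s s' := by
            apply Finset.sum_le_sum
            intro s' _
            rw [he s', abs_mul, abs_of_nonneg hγ0]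
            apply mul_le_mul_of_nonneg_left _ hγ0
            calc |∑ s, e s * K s s'| ≤ ∑ s, |e s * K s s'| :=
                  Finset.abs_sum_le_sum_abs _ _
              _ = ∑ s, |e s| * K s s' := by
                  apply Finset.sum_congr rfl
                  intro s _
                  rw [abs_mul, abs_of_nonneg (hK0 s s')]
        _ = γ * ∑ s, |e s| := by
            rw [← Finset.mul_sum, Finset.sum_comm]
            congr 1
            apply Finset.sum_congr rfl
            intro s _
            rw [← Finset.mul_sum, hK1 s, mul_one]
    have hzero : ∑ s, |e s| = 0 := by
      have h0 : 0 ≤ ∑ s, |e s| := Finset.sum_nonneg fun s _ => abs_nonneg _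
      nlinarith
    funext s
    have h1 : |e s| = 0 :=
      (Finset.sum_eq_zero_iff_of_nonneg
        (fun s _ => abs_nonneg (e s))).mp hzero s (Finset.mem_univ s)
    have h2 : e s = 0 := abs_eq_zero.mp h1
    have : d₁ s - d₂ s = 0 := h2
    linarith
  -- Construction of a solution via a geometric series
  set p : ℕ → S → ℝ := fun n => Nat.rec
    (fun s' => if s' = s₀ then (1:ℝ) else 0)
    (fun _ q s' => ∑ s, q s * K s s') n with hpdef
  have hp0 : ∀ n s', 0 ≤ p n s' := by
    intro n
    induction n with
    | zero =>
      intro s'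
      show (0:ℝ) ≤ if s' = s₀ then 1 else 0
      split <;> norm_num
    | succ n ih =>
      intro s'
      exact Finset.sum_nonneg fun s _ => mul_nonneg (ih s) (hK0 s s')
  have hp1 : ∀ n, ∑ s', p n s' = 1 := by
    intro n
    induction n with
    | zero =>
      show ∑ s', (if s' = s₀ then (1:ℝ) else 0) = 1
      simp
    | succ n ih =>
      show ∑ s', ∑ s, p n s * K s s' = 1
      rw [Finset.sum_comm]
      calc ∑ s, ∑ s', p n s * K s s' = ∑ s, p n s * ∑ s', K s s' := by
            simp [Finset.mul_sum]
        _ = 1 := by simp [hK1, ih]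
  have hple : ∀ n s', p n s' ≤ 1 := by
    intro n s'
    calc p n s' ≤ ∑ s, p n s :=
          Finset.single_le_sum (fun s _ => hp0 n s) (Finset.mem_univ s')
      _ = 1 := hp1 n
  have hsum : ∀ s', Summable (fun n => γ ^ n * p n s') := by
    intro s'
    apply Summable.of_nonneg_of_le
      (fun n => mul_nonneg (pow_nonneg hγ0 n) (hp0 n s'))
      (fun n => ?_) (summable_geometric_of_lt_one hγ0 hγ1)
    calc γ ^ n * p n s' ≤ γ ^ n * 1 :=
          mul_le_mul_of_nonneg_left (hple n s') (pow_nonneg hγ0 n)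
      _ = γ ^ n := mul_one _
  set d₀ : S → ℝ := fun s' => (1 - γ) * ∑' n, γ ^ n * p n s' with hd₀def
  have hvis : IsVisitation P γ π s₀ d₀ := by
    intro s'
    have key : (∑' n, γ ^ n * p n s') =
        (if s' = s₀ then (1:ℝ) else 0)
          + γ * ∑ s, (∑' n, γ ^ n * p n s) * K s s' := by
      rw [Summable.tsum_eq_zero_add (hsum s')]
      have h00 : γ ^ 0 * p 0 s' = (if s' = s₀ then (1:ℝ) else 0) := by
        show γ ^ 0 * (if s' = s₀ then (1:ℝ) else 0) = _
        rw [pow_zero, one_mul]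
      rw [h00]
      congr 1
      have h1 : ∀ n : ℕ, γ ^ (n + 1) * p (n + 1) s'
          = γ * ∑ s, (γ ^ n * p n s) * K s s' := by
        intro n
        show γ ^ (n + 1) * (∑ s, p n s * K s s') = _
        rw [Finset.mul_sum, Finset.mul_sum]
        apply Finset.sum_congr rfl
        intro s _
        ring
      calc (∑' n : ℕ, γ ^ (n + 1) * p (n + 1) s')
          = ∑' n : ℕ, γ * ∑ s, (γ ^ n * p n s) * K s s' := tsum_congr h1
        _ = γ * ∑' n : ℕ, ∑ s, (γ ^ n * p n s) * K s s' := tsum_mul_left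
        _ = γ * ∑ s, (∑' n, γ ^ n * p n s) * K s s' := by
            congr 1
            rw [Summable.tsum_finsetSum (fun s _ => (hsum s).mul_right (K s s'))]
            apply Finset.sum_congr rfl
            intro s _
            rw [← tsum_mul_right]
    calc d₀ s' = (1 - γ) * ((if s' = s₀ then (1:ℝ) else 0)
          + γ * ∑ s, (∑' n, γ ^ n * p n s) * K s s') := by
            rw [hd₀def]; exact congrArg _ key
      _ = (1 - γ) * (if s' = s₀ then 1 else 0)
          + γ * ∑ s, d₀ s * ∑ a, π s a * P s a s' := by
          rw [mul_add]
          congr 1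
          rw [Finset.mul_sum, Finset.mul_sum, Finset.mul_sum]
          apply Finset.sum_congr rfl
          intro s _
          show (1 - γ) * (γ * ((∑' n, γ ^ n * p n s) * K s s'))
            = γ * (d₀ s * K s s')
          simp only [hd₀def]
          ring
  -- Normalization from the fixed-point equation
  have hnorm : ∀ d : S → ℝ, IsVisitation P γ π s₀ d → ∑ s, d s = 1 := by
    intro d hd
    have hsumeq : ∑ s', d s' = (1 - γ) + γ * ∑ s, d s := by
      calc ∑ s', d s' = ∑ s', ((1 - γ) * (if s' = s₀ then 1 else 0)
            + γ * ∑ s, d s * K s s') := Finset.sum_congr rfl (fun s' _ => hd s')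
        _ = (1 - γ) + γ * ∑ s', ∑ s, d s * K s s' := by
            rw [Finset.sum_add_distrib, ← Finset.mul_sum, ← Finset.mul_sum]
            congr 1
            simp
        _ = (1 - γ) + γ * ∑ s, d s := by
            congr 2
            rw [Finset.sum_comm]
            apply Finset.sum_congr rfl
            intro s _
            rw [← Finset.mul_sum, hK1 s, mul_one]
    nlinarith
  refine ⟨⟨d₀, hvis, fun d hd => huniq d d₀ hd hvis⟩, fun d hd => ⟨?_, hnorm d hd⟩⟩
  have hdd : d = d₀ := huniq d d₀ hd hvis
  subst hdd
  intro s
  have : d₀ s = (1 - γ) * ∑' n, γ ^ n * p n s := by rw [hd₀def]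
  rw [this]
  exact mul_nonneg (by linarith) (tsum_nonneg fun n =>
    mul_nonneg (pow_nonneg hγ0 n) (hp0 n s))
end
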